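/- arXiv:2204.11084 — 14 statements merged into one kernel-verified Lean document; each statement's English description precedes it below -/
import Mathlib

section
/- If M ⊆ [n]^d is a basic subset, then |M| ≤ d·n − (d−1). -/
/-- A finite subset `M ⊆ [n]^d` (the cube identified with `Fin d → Fin n`) is *basic*
if every function on `M` decomposes as a sum of univariate functions. -/
def IsBasic {n d : ℕ} (M : Finset (Fin d → Fin n)) : Prop :=
  ∀ f : (Fin d → Fin n) → ℝ, ∃ g : Fin d → Fin n → ℝ,
    ∀ x ∈ M, f x = ∑ i, g i (x i)

/-- Linear extension-by-zero from functions on nonzero elements of `Fin n` to `Fin n`. -/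
noncomputable def ext0 {n : ℕ} [NeZero n] :
    ({v : Fin n // v ≠ 0} → ℝ) →ₗ[ℝ] (Fin n → ℝ) where
  toFun h v := if hv : v = 0 then 0 else h ⟨v, hv⟩
  map_add' a b := by funext v; by_cases hv : v = 0 <;> simp [hv]
  map_smul' c a := by funext v; by_cases hv : v = 0 <;> simp [hv]

lemma sum_split {α : Type*} [Fintype α] [DecidableEq α] (a : α) (f : α → ℝ) :
    ∑ i, f i = f a + ∑ i : {i // i ≠ a}, f i.1 := by
  rw [← Finset.add_sum_erase Finset.univ f (Finset.mem_univ a)]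
  congr 1
  exact Finset.sum_subtype (p := fun i => i ≠ a) (Finset.univ.erase a)
    (fun x => by simp [Finset.mem_erase]) f

/-- The evaluation linear map. -/
noncomputable def Phi {n d : ℕ} [NeZero n] [NeZero d] (M : Finset (Fin d → Fin n)) :
    ((Fin n → ℝ) × ({i : Fin d // i ≠ 0} → {v : Fin n // v ≠ 0} → ℝ)) →ₗ[ℝ] (M → ℝ) where
  toFun g x := g.1 (x.1 0) + ∑ i : {i : Fin d // i ≠ 0}, ext0 (g.2 i) (x.1 i.1)
  map_add' a b := by
    funext x
    simp only [Prod.fst_add, Prod.snd_add, Pi.add_apply, map_add]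
    rw [Finset.sum_add_distrib]
    ring
  map_smul' c a := by
    funext x
    simp only [Prod.smul_fst, Prod.smul_snd, Pi.smul_apply, map_smul, smul_eq_mul,
      RingHom.id_apply]
    rw [mul_add, Finset.mul_sum]

/-- If `M ⊆ [n]^d` is basic, then `|M| ≤ d·n − (d−1)`. -/
theorem card_le_of_isBasic {n d : ℕ} (hn : 0 < n) (hd : 0 < d)
    (M : Finset (Fin d → Fin n)) (hM : IsBasic M) :
    M.card ≤ d * n - (d - 1) := by
  haveI : NeZero n := ⟨hn.ne'⟩
  haveI : NeZero d := ⟨hd.ne'⟩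
  classical
  -- Phi is surjective
  have hsurj : Function.Surjective (Phi M) := by
    intro f
    obtain ⟨g, hg⟩ := hM (fun x => if h : x ∈ M then f ⟨x, h⟩ else 0)
    refine ⟨⟨fun v => g 0 v + ∑ i : {i : Fin d // i ≠ 0}, g i.1 0,
      fun i v => g i.1 v.1 - g i.1 0⟩, ?_⟩
    funext x
    have hx := hg x.1 x.2
    simp only [x.2, dif_pos] at hx
    have key : ∀ i : {i : Fin d // i ≠ 0},
        ext0 (fun v : {v : Fin n // v ≠ 0} => g i.1 v.1 - g i.1 0) (x.1 i.1)
          = g i.1 (x.1 i.1) - g i.1 0 := by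
      intro i
      by_cases hv : x.1 i.1 = 0 <;> simp [ext0, hv]
    show _ + ∑ i : {i : Fin d // i ≠ 0}, _ = f x
    rw [Finset.sum_congr rfl (fun i _ => key i)]
    rw [hx, sum_split (0 : Fin d) (fun i => g i (x.1 i))]
    rw [Finset.sum_sub_distrib]
    ring
  -- rank inequality
  have h1 : Module.finrank ℝ (M → ℝ) ≤
      Module.finrank ℝ ((Fin n → ℝ) × ({i : Fin d // i ≠ 0} → {v : Fin n // v ≠ 0} → ℝ)) := by
    have := LinearMap.finrank_range_le (Phi M)
    rwa [LinearMap.range_eq_top.mpr hsurj, finrank_top] at this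
  have h2 : Module.finrank ℝ (M → ℝ) = M.card := by
    rw [Module.finrank_pi, Fintype.card_coe]
  have hcard1 : Fintype.card {i : Fin d // i ≠ 0} = d - 1 := by
    rw [Fintype.card_subtype_compl, Fintype.card_subtype_eq, Fintype.card_fin]
  have hcard2 : Fintype.card {v : Fin n // v ≠ 0} = n - 1 := by
    rw [Fintype.card_subtype_compl, Fintype.card_subtype_eq, Fintype.card_fin]
  have h3 : Module.finrank ℝ
      ((Fin n → ℝ) × ({i : Fin d // i ≠ 0} → {v : Fin n // v ≠ 0} → ℝ))
      = n + (d - 1) * (n - 1) := by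
    rw [Module.finrank_prod, Module.finrank_pi, Fintype.card_fin,
      Module.finrank_pi_fintype, Finset.sum_const]
    simp [Module.finrank_pi, hcard1, hcard2, mul_comm]
  rw [h2, h3] at h1
  obtain ⟨d', rfl⟩ := Nat.exists_eq_succ_of_ne_zero hd.ne'
  obtain ⟨n', rfl⟩ := Nat.exists_eq_succ_of_ne_zero hn.ne'
  simp only [Nat.succ_eq_add_one, Nat.add_sub_cancel] at h1 ⊢
  have harith : (n' + 1) + d' * n' = (d' + 1) * (n' + 1) - d' := by
    have h : (d' + 1) * (n' + 1) = ((n' + 1) + d' * n') + d' := by ring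
    rw [h, Nat.add_sub_cancel]
  rw [← harith]
  exact h1
end

section
/- For all positive integers n and d, the subset M = {(k,1,…,1), (1,k,1,…,1), …, (1,…,1,k) : k ∈ [n]} of [n]^d (all points having at most one coordinate different from 1) is basic and has exactly d·n − (d−1) elements; hence the bound |M| ≤ d·n − (d−1) for basic subsets cannot be improved. -/
/-!
Every point of the cross lies on one of the `d` axis-parallel lines through the centre `c`, and
these lines meet only at `c`. Hence a function `f` on the cross is the sum over the lines of its
increments `f (update c i (x i)) - f c`, plus the constant `f c` placed on one line; and the cross
consists of `c` together with `d (n - 1)` further points.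
-/

open Finset Function

section Cross

variable {ι α : Type*} [DecidableEq ι]

theorem update_const_eq_of_forall_ne {a : α} {x : ι → α} {i : ι} (h : ∀ j ≠ i, x j = a) :
    update (fun _ => a) i (x i) = x :=
  update_eq_iff.mpr ⟨rfl, fun j hj => (h j hj).symm⟩

def crossParam (a : α) : Option (ι × {k : α // k ≠ a}) → ι → α
  | none => fun _ => a
  | some p => update (fun _ => a) p.1 p.2

theorem crossParam_injective (a : α) : Injective (crossParam (ι := ι) a) := by
  rintro (_ | ⟨i, k, hk⟩) (_ | ⟨i', k', hk'⟩) h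
  · rfl
  · exact absurd (congrFun h i') (by simpa [crossParam] using hk'.symm)
  · exact absurd (congrFun h i) (by simpa [crossParam] using hk)
  · obtain rfl | hii' := eq_or_ne i i'
    · simpa using update_injective _ i h
    · exact absurd (congrFun h i) (by simpa [crossParam, hii'] using hk)

variable [Fintype ι] [Fintype α] [DecidableEq α]

def cross (a : α) : Finset (ι → α) :=
  univ.filter fun x => ∃ i, ∀ j ≠ i, x j = a

theorem mem_cross {a : α} {x : ι → α} : x ∈ cross a ↔ ∃ i, ∀ j ≠ i, x j = a := by
  simp [cross]

theorem update_const_mem_cross (a : α) (i : ι) (k : α) : update (fun _ => a) i k ∈ cross a :=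
  mem_cross.mpr ⟨i, fun _ hj => update_of_ne hj _ _⟩

theorem exists_sum_eq_of_mem_cross {M : Type*} [AddCommGroup M] [Nonempty ι] (a : α)
    (f : (ι → α) → M) : ∃ g : ι → α → M, ∀ x ∈ cross a, f x = ∑ i, g i (x i) := by
  obtain ⟨i₀⟩ := ‹Nonempty ι›
  set c : ι → α := fun _ => a
  -- Each line through `c` contributes its increment over `f c`; one line also carries `f c`.
  refine ⟨fun i k => f (update c i k) - f c + if i = i₀ then f c else 0, fun x hx => ?_⟩
  obtain ⟨i, hi⟩ := mem_cross.mp hx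
  have increment : ∀ j, f (update c j (x j)) - f c = if j = i then f x - f c else 0 := by
    intro j
    split_ifs with hj
    · rw [hj, update_const_eq_of_forall_ne hi]
    · rw [hi j hj, update_eq_self_iff.mpr rfl, sub_self]
  simp only [sum_add_distrib, increment, sum_ite_eq', mem_univ, if_true]
  abel

theorem image_crossParam [Nonempty ι] (a : α) : univ.image (crossParam (ι := ι) a) = cross a := by
  ext x
  simp only [mem_image, mem_univ, true_and]
  constructor
  · rintro ⟨_ | ⟨i, k⟩, rfl⟩
    · exact mem_cross.mpr ⟨Classical.arbitrary _, fun _ _ => rfl⟩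
    · exact update_const_mem_cross a i k
  · intro hx
    obtain ⟨i, hi⟩ := mem_cross.mp hx
    by_cases hxi : x i = a
    · refine ⟨none, funext fun j => ?_⟩
      obtain rfl | hj := eq_or_ne j i
      exacts [hxi.symm, (hi j hj).symm]
    · exact ⟨some (i, ⟨x i, hxi⟩), update_const_eq_of_forall_ne hi⟩

theorem card_cross [Nonempty ι] (a : α) :
    #(cross (ι := ι) a) = Fintype.card ι * (Fintype.card α - 1) + 1 := by
  rw [← image_crossParam, card_image_of_injective _ (crossParam_injective a)]
  simp

end Cross

/-- The set of points of `[n]^d` having at most one coordinate different from `1`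
(in `Fin n`, value `1` is the index `0`) is basic and has exactly `d·n − (d−1)` elements,
so the bound for basic subsets cannot be improved. -/
theorem isBasic_cross_and_card (n d : ℕ) (hn : 0 < n) (hd : 0 < d) :
    IsBasic (Finset.univ.filter
        (fun x : Fin d → Fin n => ∃ i : Fin d, ∀ j, j ≠ i → (x j : ℕ) = 0)) ∧
      (Finset.univ.filter
        (fun x : Fin d → Fin n => ∃ i : Fin d, ∀ j, j ≠ i → (x j : ℕ) = 0)).card
        = d * n - (d - 1) := by
  have : Nonempty (Fin d) := ⟨⟨0, hd⟩⟩
  have hM : (univ.filter fun x : Fin d → Fin n => ∃ i : Fin d, ∀ j, j ≠ i → (x j : ℕ) = 0) =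
      cross ⟨0, hn⟩ := by
    simp only [cross, Fin.ext_iff]
  rw [hM, card_cross, Fintype.card_fin, Fintype.card_fin, Nat.mul_sub_one]
  refine ⟨exists_sum_eq_of_mem_cross _, ?_⟩
  have : d ≤ d * n := Nat.le_mul_of_pos_right d hn
  omega
end

section
/- If M ⊆ [n]^d is a minimal non-basic subset such that every layer of [n]^d has non-empty intersection with M, then |M| ≥ 2n. -/
/-- If `M ⊆ [n]^d` is a minimal non-basic subset (non-basic, but every proper subset is
basic) meeting every layer `{x : x i = j}`, then `|M| ≥ 2n`. -/
theorem two_n_le_card_of_minimal_nonbasic {n d : ℕ} (hn : 0 < n) (hd : 0 < d)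
    (M : Finset (Fin d → Fin n))
    (hnb : ¬ IsBasic M)
    (hmin : ∀ K ⊂ M, IsBasic K)
    (hlayers : ∀ (i : Fin d) (j : Fin n), ∃ x ∈ M, x i = j) :
    2 * n ≤ M.card := by
  classical
  set i0 : Fin d := ⟨0, hd⟩ with hi0
  have key : ∀ j : Fin n, 2 ≤ (M.filter (fun x => x i0 = j)).card := by
    intro j
    by_contra h
    push_neg at h
    obtain ⟨x₀, hx₀M, hx₀j⟩ := hlayers i0 j
    have hx₀f : x₀ ∈ M.filter (fun x => x i0 = j) := Finset.mem_filter.2 ⟨hx₀M, hx₀j⟩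
    have hc1 : (M.filter (fun x => x i0 = j)).card = 1 := by
      have h1 : 1 ≤ (M.filter (fun x => x i0 = j)).card :=
        Finset.card_pos.2 ⟨x₀, hx₀f⟩
      exact Nat.le_antisymm (Nat.lt_succ_iff.mp h) h1
    obtain ⟨a, ha⟩ := Finset.card_eq_one.1 hc1
    have hax : a = x₀ := by
      have h2 := hx₀f; rw [ha] at h2; exact (Finset.mem_singleton.1 h2).symm
    have hfil : M.filter (fun x => x i0 = j) = {x₀} := by rw [ha, hax]
    apply hnb
    intro f
    have hK : M.erase x₀ ⊂ M := Finset.erase_ssubset hx₀M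
    obtain ⟨g, hg⟩ := hmin _ hK f
    set δ := f x₀ - ∑ i, g i (x₀ i) with hδ
    refine ⟨fun i v => if i = i0 ∧ v = j then g i v + δ else g i v, ?_⟩
    intro x hxM
    by_cases hx : x = x₀
    · subst hx
      have hterm : ∀ i, (if i = i0 ∧ x i = j then g i (x i) + δ else g i (x i))
          = g i (x i) + if i = i0 then δ else 0 := by
        intro i
        by_cases hi : i = i0
        · subst hi; simp [hx₀j]
        · simp [hi]
      rw [Finset.sum_congr rfl (fun i _ => hterm i), Finset.sum_add_distrib,
        Finset.sum_ite_eq' Finset.univ i0 (fun _ => δ)]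
      simp [hδ]
    · have hxK : x ∈ M.erase x₀ := Finset.mem_erase.2 ⟨hx, hxM⟩
      have hxj : x i0 ≠ j := by
        intro hxj
        have hmem : x ∈ M.filter (fun x => x i0 = j) := Finset.mem_filter.2 ⟨hxM, hxj⟩
        rw [hfil] at hmem
        exact hx (Finset.mem_singleton.1 hmem)
      have hterm : ∀ i, (if i = i0 ∧ x i = j then g i (x i) + δ else g i (x i))
          = g i (x i) := by
        intro i
        rw [if_neg]
        rintro ⟨hi, hvi⟩
        subst hi
        exact hxj hvi
      rw [Finset.sum_congr rfl (fun i _ => hterm i)]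
      exact hg x hxK
  have hpart : M.card = ∑ j : Fin n, (M.filter (fun x => x i0 = j)).card :=
    Finset.card_eq_sum_card_fiberwise (fun x _ => Finset.mem_univ (x i0))
  calc 2 * n = ∑ _j : Fin n, 2 := by simp [mul_comm]
    _ ≤ ∑ j : Fin n, (M.filter (fun x => x i0 = j)).card :=
        Finset.sum_le_sum (fun j _ => key j)
    _ = M.card := hpart.symm
end

section
/- If M ⊆ [n]^d is a minimal non-basic subset such that every layer of [n]^d has non-empty intersection with M, then |M| ≤ d·n − (d−2). -/
/-!
The linear map `g ↦ (x ↦ ∑ i, g i (x i))` from `ℝ^{[d] × [n]}` to `ℝ^K` is onto exactly when `K`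
is basic. Its kernel contains the shifts `g i ↦ g i + c i` by constants with `∑ i, c i = 0`, a
space of dimension `d - 1`, so a basic set has at most `d n - (d - 1)` points. Deleting one
point of a minimal non-basic set leaves a basic set, whence `|M| ≤ d n - (d - 2)` once `d ≥ 2`;
for `d = 1` every set is basic.
-/

open Module

section SumMap

variable {ι α : Type*} [Fintype ι]

noncomputable def sumMap (K : Finset (ι → α)) : (ι → α → ℝ) →ₗ[ℝ] (K → ℝ) where
  toFun g x := ∑ i, g i (x.1 i)
  map_add' g h := by funext x; simp [Finset.sum_add_distrib]
  map_smul' c g := by funext x; simp [Finset.mul_sum]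

theorem sumMap_apply (K : Finset (ι → α)) (g : ι → α → ℝ) (x : K) :
    sumMap K g x = ∑ i, g i (x.1 i) :=
  rfl

def constShift : (ι → ℝ) →ₗ[ℝ] (ι → α → ℝ) where
  toFun c i _ := c i
  map_add' _ _ := rfl
  map_smul' _ _ := rfl

omit [Fintype ι] in
theorem constShift_injective [Nonempty α] : Function.Injective (constShift (ι := ι) (α := α)) :=
  fun _ _ h => funext fun i => congrFun (congrFun h i) (Classical.arbitrary α)

theorem sumMap_constShift (K : Finset (ι → α)) (c : ι → ℝ) :
    sumMap K (constShift c) = fun _ => ∑ i, c i :=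
  rfl

noncomputable def sumFunctional : Dual ℝ (ι → ℝ) := ∑ i, LinearMap.proj i

theorem sumFunctional_apply (c : ι → ℝ) : sumFunctional c = ∑ i, c i := by
  simp [sumFunctional]

theorem card_sub_one_le_finrank_ker_sumFunctional :
    Fintype.card ι - 1 ≤ finrank ℝ (LinearMap.ker (sumFunctional (ι := ι))) := by
  have hrank := LinearMap.finrank_range_add_finrank_ker (sumFunctional (ι := ι))
  have hrange := (LinearMap.range (sumFunctional (ι := ι))).finrank_le
  rw [finrank_self] at hrange
  rw [finrank_fintype_fun_eq_card] at hrank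
  omega

theorem map_ker_sumFunctional_le_ker_sumMap (K : Finset (ι → α)) :
    (LinearMap.ker sumFunctional).map constShift ≤ LinearMap.ker (sumMap K) := by
  rintro _ ⟨c, hc, rfl⟩
  rw [LinearMap.mem_ker, sumMap_constShift, ← sumFunctional_apply, LinearMap.mem_ker.1 hc]
  rfl

theorem finrank_range_sumMap_add_le [Fintype α] [Nonempty α] (K : Finset (ι → α)) :
    finrank ℝ (LinearMap.range (sumMap K)) + (Fintype.card ι - 1) ≤
      Fintype.card ι * Fintype.card α := by
  have hrank := LinearMap.finrank_range_add_finrank_ker (sumMap K)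
  have hker : finrank ℝ ((LinearMap.ker sumFunctional).map constShift) ≤
      finrank ℝ (LinearMap.ker (sumMap K)) :=
    Submodule.finrank_mono (map_ker_sumFunctional_le_ker_sumMap K)
  rw [← (Submodule.equivMapOfInjective _ constShift_injective _).finrank_eq] at hker
  have hshift := card_sub_one_le_finrank_ker_sumFunctional (ι := ι)
  rw [finrank_pi_fintype] at hrank
  simp only [finrank_fintype_fun_eq_card, Finset.sum_const, Finset.card_univ,
    smul_eq_mul] at hrank
  omega

end SumMap

theorem IsBasic.surjective_sumMap {n d : ℕ} {K : Finset (Fin d → Fin n)} (hK : IsBasic K) :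
    Function.Surjective (sumMap K) := by
  intro φ
  obtain ⟨g, hg⟩ := hK fun x => if h : x ∈ K then φ ⟨x, h⟩ else 0
  refine ⟨g, funext fun x => ?_⟩
  simpa [sumMap_apply] using (hg x.1 x.2).symm

theorem IsBasic.card_add_le {n d : ℕ} (hn : 0 < n) {K : Finset (Fin d → Fin n)}
    (hK : IsBasic K) : K.card + (d - 1) ≤ d * n := by
  have : Nonempty (Fin n) := ⟨⟨0, hn⟩⟩
  have hrange : finrank ℝ (LinearMap.range (sumMap K)) = K.card := by
    rw [LinearMap.range_eq_top.2 hK.surjective_sumMap, finrank_top,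
      finrank_fintype_fun_eq_card, Fintype.card_coe]
  simpa [hrange] using finrank_range_sumMap_add_le K

theorem isBasic_empty {n d : ℕ} : IsBasic (∅ : Finset (Fin d → Fin n)) :=
  fun _ => ⟨0, by simp⟩

theorem isBasic_of_dim_one {n : ℕ} (M : Finset (Fin 1 → Fin n)) : IsBasic M := by
  intro f
  refine ⟨fun _ j => f fun _ => j, fun x _ => ?_⟩
  rw [Fin.sum_univ_one]
  exact congrArg f (funext fun i => congrArg x (Subsingleton.elim i 0))

theorem card_le_of_minimal_nonbasic_general {n d : ℕ} (hn : 0 < n) (hd : 0 < d)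
    (M : Finset (Fin d → Fin n))
    (hnb : ¬ IsBasic M)
    (hmin : ∀ K ⊂ M, IsBasic K) :
    M.card ≤ d * n - (d - 2) := by
  obtain ⟨x, hx⟩ : M.Nonempty :=
    Finset.nonempty_iff_ne_empty.2 fun h => hnb (h ▸ isBasic_empty)
  obtain rfl | hd2 : d = 1 ∨ 2 ≤ d := by omega
  · exact absurd (isBasic_of_dim_one M) hnb
  have hbasic := (hmin _ (Finset.erase_ssubset hx)).card_add_le hn
  have hcard := Finset.card_erase_add_one hx
  omega

/-- If `M ⊆ [n]^d` is a minimal non-basic subset (non-basic, but every proper subset is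
basic) meeting every layer `{x : x i = j}`, then `|M| ≤ d·n − (d−2)`. -/
theorem card_le_of_minimal_nonbasic {n d : ℕ} (hn : 0 < n) (hd : 0 < d)
    (M : Finset (Fin d → Fin n))
    (hnb : ¬ IsBasic M)
    (hmin : ∀ K ⊂ M, IsBasic K)
    (hlayers : ∀ (i : Fin d) (j : Fin n), ∃ x ∈ M, x i = j) :
    M.card ≤ d * n - (d - 2) :=
  card_le_of_minimal_nonbasic_general hn hd M hnb hmin
end

section
/- Let M ⊆ [n]^d be a subset such that every layer of [n]^d contains exactly two or zero elements of M. Then M is non-basic if and only if there exists a non-empty subset K ⊆ M and a coloring ε : K → {−1, 1} such that for every layer L, the sum Σ_{x ∈ L ∩ K} ε(x) equals 0 (i.e., every layer contains the same number of elements of K of each color). -/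
/-! A function on `M` fails to be a sum of univariate functions exactly when some weighting `w`
of `M`, nonzero somewhere, annihilates all of them, i.e. sums to zero on every layer. When each
layer meets `M` in at most two points, a zero layer sum makes the two weights opposite, so the
signs of `w` on its support form a balanced colouring. Conversely a balanced colouring of `K` is
such a weighting of `K`, and a subset of a basic set is basic. -/

theorem exists_sum_mul_eq_zero_of_not_forall_eqOn {K ι U : Type*} [Field K] [Fintype ι]
    [AddCommGroup U] [Module K U] (T : U →ₗ[K] ι → K) (s : Finset ι)
    (h : ¬ ∀ f : ι → K, ∃ u, Set.EqOn f (T u) s) :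
    ∃ w : ι → K, (∃ x ∈ s, w x ≠ 0) ∧ ∀ u, ∑ x ∈ s, w x * T u x = 0 := by
  classical
  set N := LinearMap.ker (LinearMap.funLeft K K ((↑) : s → ι))
  have hN : ∀ v, v ∈ N ↔ ∀ x ∈ s, v x = 0 := by simp [N, funext_iff]
  have hlt : LinearMap.range T ⊔ N < ⊤ := by
    refine lt_top_iff_ne_top.2 fun htop => h fun f => ?_
    obtain ⟨_, ⟨u, rfl⟩, v, hv, hf⟩ := Submodule.mem_sup.1 (htop ▸ Submodule.mem_top : f ∈ _)
    exact ⟨u, fun x hx => by simp [← hf, (hN v).1 hv x hx]⟩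
  -- `φ` kills every function vanishing on `s`, so its weights `w` are supported on `s`.
  obtain ⟨φ, hφ0, hφ⟩ := Submodule.exists_le_ker_of_lt_top _ hlt
  set w : ι → K := fun x => φ fun y => if x = y then 1 else 0
  have hw_out : ∀ x ∉ s, w x = 0 := fun x hx =>
    hφ (Submodule.mem_sup_right ((hN _).2 fun y hy => if_neg fun hxy : x = y => hx (hxy ▸ hy)))
  have hφw : ∀ v, φ v = ∑ x ∈ s, w x * v x := by
    intro v
    rw [φ.pi_apply_eq_sum_univ, ← Finset.sum_subset s.subset_univ fun x _ hx => by
      exact mul_eq_zero_of_right _ (hw_out x hx)]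
    exact Finset.sum_congr rfl fun x _ => mul_comm _ _
  refine ⟨w, ?_, fun u => (hφw (T u)).symm.trans (hφ (Submodule.mem_sup_left ⟨u, rfl⟩))⟩
  by_contra! hw
  exact hφ0 (LinearMap.ext fun v => by
    rw [hφw, Finset.sum_eq_zero fun x hx => by rw [hw x hx, zero_mul]]; rfl)

theorem sum_sign_eq_zero_of_card_le_two {α R : Type*} [AddCommGroup R] [LinearOrder R]
    [IsOrderedAddMonoid R] {s : Finset α} (hs : s.card ≤ 2) {w : α → R}
    (hw : ∑ x ∈ s, w x = 0) : ∑ x ∈ s, (SignType.sign (w x) : ℤ) = 0 := by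
  classical
  interval_cases h : s.card
  · simp [Finset.card_eq_zero.1 h]
  · obtain ⟨a, rfl⟩ := Finset.card_eq_one.1 h
    simp_all
  · obtain ⟨a, b, hab, rfl⟩ := Finset.card_eq_two.1 h
    rw [Finset.sum_pair hab] at hw ⊢
    rw [eq_neg_of_add_eq_zero_right hw, Left.sign_neg, SignType.coe_neg, add_neg_cancel]

section Cube

variable {n d : ℕ}

def univariateSum : (Fin d → Fin n → ℝ) →ₗ[ℝ] (Fin d → Fin n) → ℝ where
  toFun g x := ∑ i, g i (x i)
  map_add' g h := by ext x; simp [Finset.sum_add_distrib]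
  map_smul' c g := by ext x; simp [Finset.mul_sum]

@[simp]
theorem univariateSum_apply (g : Fin d → Fin n → ℝ) (x : Fin d → Fin n) :
    univariateSum g x = ∑ i, g i (x i) :=
  rfl

def LayerBalanced {R : Type*} [AddCommMonoid R] (s : Finset (Fin d → Fin n))
    (w : (Fin d → Fin n) → R) : Prop :=
  ∀ i j, ∑ x ∈ s.filter (fun x => x i = j), w x = 0

theorem sum_mul_univariateSum (s : Finset (Fin d → Fin n)) (w : (Fin d → Fin n) → ℝ)
    (g : Fin d → Fin n → ℝ) :
    ∑ x ∈ s, w x * univariateSum g x =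
      ∑ i, ∑ j, g i j * ∑ x ∈ s.filter (fun x => x i = j), w x := by
  simp only [univariateSum_apply, Finset.mul_sum]
  rw [Finset.sum_comm]
  refine Finset.sum_congr rfl fun i _ => ?_
  rw [← Finset.sum_fiberwise s (fun x => x i)]
  refine Finset.sum_congr rfl fun j _ => Finset.sum_congr rfl fun x hx => ?_
  rw [(Finset.mem_filter.1 hx).2, mul_comm]

theorem layerBalanced_iff_forall_sum_mul_univariateSum_eq_zero {s : Finset (Fin d → Fin n)}
    {w : (Fin d → Fin n) → ℝ} :
    LayerBalanced s w ↔ ∀ g, ∑ x ∈ s, w x * univariateSum g x = 0 := by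
  refine ⟨fun hw g => ?_, fun h i j => ?_⟩
  · rw [sum_mul_univariateSum]
    exact Finset.sum_eq_zero fun i _ => Finset.sum_eq_zero fun j _ => by rw [hw i j, mul_zero]
  · have hij := h (Pi.single i (Pi.single j 1))
    rw [sum_mul_univariateSum] at hij
    simpa [Pi.single_apply, ite_apply, ite_mul] using hij

theorem IsBasic.mono {K M : Finset (Fin d → Fin n)} (hM : IsBasic M) (hKM : K ⊆ M) :
    IsBasic K :=
  fun f => (hM f).imp fun _ hg x hx => hg x (hKM hx)

theorem IsBasic.eq_zero_of_layerBalanced {M : Finset (Fin d → Fin n)} (hM : IsBasic M)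
    {w : (Fin d → Fin n) → ℝ} (hw : LayerBalanced M w) {x₀ : Fin d → Fin n} (hx₀ : x₀ ∈ M) :
    w x₀ = 0 := by
  obtain ⟨g, hg⟩ := hM fun x => if x = x₀ then 1 else 0
  have h : ∑ x ∈ M, w x * (if x = x₀ then 1 else 0) = 0 := by
    rw [Finset.sum_congr rfl fun x hx => congrArg (w x * ·) (hg x hx)]
    exact layerBalanced_iff_forall_sum_mul_univariateSum_eq_zero.1 hw g
  simpa [hx₀] using h

theorem exists_ne_zero_layerBalanced_of_not_isBasic {M : Finset (Fin d → Fin n)}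
    (hM : ¬ IsBasic M) : ∃ w : (Fin d → Fin n) → ℝ, (∃ x ∈ M, w x ≠ 0) ∧ LayerBalanced M w := by
  obtain ⟨w, hw₀, hw⟩ := exists_sum_mul_eq_zero_of_not_forall_eqOn univariateSum M hM
  exact ⟨w, hw₀, layerBalanced_iff_forall_sum_mul_univariateSum_eq_zero.2 hw⟩

end Cube

theorem nonbasic_iff_coloring_general {n d : ℕ}
    (M : Finset (Fin d → Fin n))
    (hlayers : ∀ (i : Fin d) (j : Fin n),
      (M.filter (fun x => x i = j)).card = 2 ∨ (M.filter (fun x => x i = j)).card = 0) :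
    ¬ IsBasic M ↔
      ∃ K ⊆ M, K.Nonempty ∧ ∃ ε : (Fin d → Fin n) → ℤ,
        (∀ x ∈ K, ε x = 1 ∨ ε x = -1) ∧
        ∀ (i : Fin d) (j : Fin n), ∑ x ∈ K.filter (fun x => x i = j), ε x = 0 := by
  constructor
  · intro hM
    obtain ⟨w, ⟨x₀, hx₀M, hx₀⟩, hw⟩ := exists_ne_zero_layerBalanced_of_not_isBasic hM
    refine ⟨M.filter (fun x => w x ≠ 0), Finset.filter_subset _ _,
      ⟨x₀, Finset.mem_filter.2 ⟨hx₀M, hx₀⟩⟩, fun x => SignType.sign (w x), fun x hx => ?_,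
      fun i j => ?_⟩
    · rcases lt_or_gt_of_ne (Finset.mem_filter.1 hx).2 with h | h
      · simp [sign_neg h]
      · simp [sign_pos h]
    · rw [Finset.filter_comm, Finset.sum_filter_of_ne (p := fun x => w x ≠ 0)
        fun x _ hx h0 => hx (by simp [h0])]
      exact sum_sign_eq_zero_of_card_le_two (by rcases hlayers i j with h | h <;> omega) (hw i j)
  · rintro ⟨K, hKM, ⟨x₀, hx₀⟩, ε, hε, hεbal⟩ hM
    have hε₀ := (hM.mono hKM).eq_zero_of_layerBalanced (w := fun x => (ε x : ℝ))
      (fun i j => by beta_reduce; exact_mod_cast hεbal i j) hx₀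
    rcases hε x₀ hx₀ with hsign | hsign <;> simp [hsign] at hε₀

/-- Let `M ⊆ [n]^d` contain exactly two or zero elements in every layer. Then `M` is
non-basic iff there is a non-empty `K ⊆ M` and a two-coloring `ε : K → {−1,1}` such that
every layer contains the same number of elements of `K` of each color (the sum of the
colors over every layer is zero). -/
theorem nonbasic_iff_coloring {n d : ℕ} (hn : 0 < n) (hd : 0 < d)
    (M : Finset (Fin d → Fin n))
    (hlayers : ∀ (i : Fin d) (j : Fin n),
      (M.filter (fun x => x i = j)).card = 2 ∨ (M.filter (fun x => x i = j)).card = 0) :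
    ¬ IsBasic M ↔
      ∃ K ⊆ M, K.Nonempty ∧ ∃ ε : (Fin d → Fin n) → ℤ,
        (∀ x ∈ K, ε x = 1 ∨ ε x = -1) ∧
        ∀ (i : Fin d) (j : Fin n), ∑ x ∈ K.filter (fun x => x i = j), ε x = 0 :=
  nonbasic_iff_coloring_general M hlayers
end

section
/- Let G be a finite simple graph on vertex set V. Then G contains no bipartite connected component if and only if for every vertex weight function w_V : V → ℝ there exists an edge weight function w_E : edgeSet(G) → ℝ such that for every vertex v, w_V(v) = Σ_{e ∈ edgeSet(G), v ∈ e} w_E(e). -/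
/-!
The vertex sums of edge weights form a linear map `ℝ^E → ℝ^V` whose transpose sends `x : V → ℝ`
to `(x a + x b)` over the edges `ab`, so it is onto iff no nonzero `x` satisfies
`x a + x b = 0` on every edge. Such an `x` equals `± x v` along the component of any vertex `v`
with `x v ≠ 0`, and comparing with `x v` 2-colours that component. Conversely, the `±1` signs of
a 2-colouring of a component, extended by zero, give such an `x`.
-/

open Finset

namespace SimpleGraph

variable {V : Type*} {G : SimpleGraph V}

theorem eq_or_eq_neg_of_reachable {K : Type*} [Ring K] {x : V → K}
    (hx : ∀ a b, G.Adj a b → x a + x b = 0) {a b : V} (h : G.Reachable a b) :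
    x b = x a ∨ x b = -x a := by
  obtain ⟨p⟩ := h
  induction p with
  | nil => exact .inl rfl
  | cons hadj _ ih =>
    rw [← neg_eq_of_add_eq_zero_right (hx _ _ hadj), neg_neg] at ih
    exact ih.symm

theorem colorable_induce_supp_of_adj_add_eq_zero {K : Type*} [Ring K] [NoZeroDivisors K]
    [NeZero (2 : K)] {x : V → K} (hx : ∀ a b, G.Adj a b → x a + x b = 0) {v : V}
    (hv : x v ≠ 0) : (G.induce (G.connectedComponentMk v).supp).Colorable 2 := by
  have hsign : ∀ u ∈ (G.connectedComponentMk v).supp, x u = x v ∨ x u = -x v :=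
    fun u hu => eq_or_eq_neg_of_reachable hx (ConnectedComponent.exact hu).symm
  refine Fintype.card_prop ▸
    Coloring.colorable (G := G.induce _) (Coloring.mk (fun u => x u = x v) ?_)
  rintro ⟨u, hu⟩ ⟨w, hw⟩ hadj hcolor
  have hwu : x w = -x u := eq_neg_of_add_eq_zero_right (hx u w hadj)
  have huw : x u = x w := by
    rcases hsign u hu with h | h <;> rcases hsign w hw with h' | h' <;> simp_all
  have hu0 : x u = 0 := by
    rw [hwu, ← add_eq_zero_iff_eq_neg, ← two_mul] at huw
    exact (mul_eq_zero.mp huw).resolve_left two_ne_zero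
  apply hv
  rcases hsign u hu with h | h
  · rw [← h, hu0]
  · rw [← neg_eq_zero, ← h, hu0]

theorem exists_ne_zero_adj_add_eq_zero_of_colorable {K : Type*} [Ring K] [Nontrivial K]
    (c : G.ConnectedComponent) (hc : (G.induce c.supp).Colorable 2) :
    ∃ x : V → K, x ≠ 0 ∧ ∀ a b, G.Adj a b → x a + x b = 0 := by
  classical
  obtain ⟨C⟩ := hc
  have hopposite : ∀ i j : Fin 2, i ≠ j → ![(1 : K), -1] i + ![1, -1] j = 0 := by
    intro i j; fin_cases i <;> fin_cases j <;> simp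
  obtain ⟨v, hv⟩ := c.nonempty_supp
  refine ⟨fun u => if hu : u ∈ c.supp then ![1, -1] (C ⟨u, hu⟩) else 0, ?_, fun a b hab => ?_⟩
  · refine Function.ne_iff.mpr ⟨v, ?_⟩
    rw [dif_pos hv]
    generalize C ⟨v, hv⟩ = i
    fin_cases i <;> simp
  · by_cases ha : a ∈ c.supp
    · have hb := (c.mem_supp_congr_adj hab).mp ha
      simp only [dif_pos ha, dif_pos hb]
      exact hopposite _ _ (C.valid (show (G.induce c.supp).Adj ⟨a, ha⟩ ⟨b, hb⟩ from hab))
    · have hb := (c.mem_supp_congr_adj hab).not.mp ha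
      simp only [dif_neg ha, dif_neg hb, add_zero]

section Incidence

variable [Fintype V] [DecidableEq V] (G) [DecidableRel G.Adj]

def incidenceSum (K : Type*) [Semiring K] : (G.edgeSet → K) →ₗ[K] V → K where
  toFun wE v := ∑ e : G.edgeSet, if v ∈ (e : Sym2 V) then wE e else 0
  map_add' wE wE' := by
    ext v
    simp only [Pi.add_apply, ← sum_add_distrib, ← ite_add_zero]
  map_smul' c wE := by
    ext v
    simp only [Pi.smul_apply, smul_eq_mul, RingHom.id_apply, mul_sum, mul_ite, mul_zero]

theorem incidenceSum_single {K : Type*} [Semiring K] {a b : V} (h : G.Adj a b) :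
    G.incidenceSum K (Pi.single ⟨s(a, b), h⟩ 1) = Pi.single a 1 + Pi.single b 1 := by
  ext v
  simp only [incidenceSum, LinearMap.coe_mk, AddHom.coe_mk, Pi.add_apply]
  rw [Fintype.sum_eq_single ⟨s(a, b), h⟩ fun e he => by simp [he]]
  have := G.ne_of_adj h
  by_cases hva : v = a <;> by_cases hvb : v = b <;> simp_all

variable {G}

theorem dualMap_incidenceSum_piEquiv_eq_zero_iff {K : Type*} [Field K] (x : V → K) :
    (G.incidenceSum K).dualMap (Module.piEquiv V K K x) = 0 ↔
      ∀ a b, G.Adj a b → x a + x b = 0 := by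
  have hx : ∀ v, Module.piEquiv V K K x (Pi.single v 1) = x v := by
    intro v
    simp [Module.piEquiv_apply_apply, Pi.single_apply]
  rw [LinearMap.dualMap_apply']
  constructor
  · intro h a b hab
    simpa [incidenceSum_single, hx] using LinearMap.congr_fun h (Pi.single ⟨s(a, b), hab⟩ 1)
  · intro h
    refine (Pi.basisFun K G.edgeSet).ext fun ⟨e, he⟩ => ?_
    induction e using Sym2.ind with
    | _ a b =>
      rw [Pi.basisFun_apply, LinearMap.comp_apply, incidenceSum_single G he, map_add, hx, hx]
      exact h a b he

theorem surjective_incidenceSum_iff {K : Type*} [Field K] :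
    Function.Surjective (G.incidenceSum K) ↔
      ∀ x : V → K, (∀ a b, G.Adj a b → x a + x b = 0) → x = 0 := by
  rw [← LinearMap.dualMap_injective_iff, ← EquivLike.injective_comp (Module.piEquiv V K K)]
  exact (injective_iff_map_eq_zero
    ((G.incidenceSum K).dualMap ∘ₗ (Module.piEquiv V K K).toLinearMap)).trans <|
      forall_congr' fun x => imp_congr_left (dualMap_incidenceSum_piEquiv_eq_zero_iff x)

end Incidence

end SimpleGraph

open SimpleGraph in
/-- A graph `G` contains no bipartite connected component (i.e. no connected component whose
induced subgraph is 2-colorable) iff for every vertex weight function `w : V → ℝ` there is an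
edge weight function `wE : edgeSet G → ℝ` such that the weight of every vertex equals the sum
of the weights of the edges incident to it. -/
theorem no_bipartite_component_iff_basic {V : Type*} [Fintype V] [DecidableEq V]
    (G : SimpleGraph V) [DecidableRel G.Adj] :
    (∀ c : G.ConnectedComponent, ¬ (G.induce c.supp).Colorable 2) ↔
      ∀ w : V → ℝ, ∃ wE : G.edgeSet → ℝ,
        ∀ v : V, w v = ∑ e : G.edgeSet, if v ∈ (e : Sym2 V) then wE e else 0 := by
  have hsurj : (∀ w : V → ℝ, ∃ wE : G.edgeSet → ℝ,
      ∀ v : V, w v = ∑ e : G.edgeSet, if v ∈ (e : Sym2 V) then wE e else 0) ↔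
      Function.Surjective (G.incidenceSum ℝ) :=
    forall_congr' fun w => exists_congr fun wE => by
      rw [funext_iff]
      exact forall_congr' fun v => eq_comm
  rw [hsurj, surjective_incidenceSum_iff]
  constructor
  · intro h x hx
    by_contra hne
    obtain ⟨v, hv⟩ := Function.ne_iff.mp hne
    exact h _ (colorable_induce_supp_of_adj_add_eq_zero hx hv)
  · intro h c hc
    obtain ⟨x, hx0, hx⟩ := exists_ne_zero_adj_add_eq_zero_of_colorable (K := ℝ) c hc
    exact hx0 (h x hx)
end

section
/- A subset M ⊆ [n]^d is non-basic if and only if there exists a non-trivial annihilation function of M, i.e., a function c : M → ℤ, not identically zero, such that for every layer L of [n]^d, Σ_{x ∈ L ∩ M} c(x) = 0. -/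
/-!
`M` is basic iff the map `g ↦ (x ↦ ∑ i, g (i, x i))` from `ℝ^([d] × [n])` to `ℝ^M` is onto.
This map is the transpose of the layer-sum map `ℝ^M → ℝ^([d] × [n])`, so `M` is basic iff the
layer-sum map is injective, i.e. iff `M` has no non-trivial real annihilation function. The
layer-sum matrix has integer entries, so a non-zero real kernel vector gives a rational one
(apply a `ℚ`-linear functional `ℝ → ℚ` coordinatewise) and then an integer one (clear denominators).
-/

open Function

namespace Matrix

variable {m n : Type*} [Fintype n]

theorem vecMul_surjective_iff_mulVec_injective {K : Type*} [Field K] [Fintype m]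
    (A : Matrix m n K) : Surjective A.vecMul ↔ Injective A.mulVec := by
  rw [mulVec_injective_iff, linearIndependent_iff_card_eq_finrank_span, Set.finrank,
    ← rank_eq_finrank_span_cols, ← rank_transpose, rank, mulVecLin_transpose,
    ← coe_vecMulLinear, ← LinearMap.range_eq_top, Submodule.eq_top_iff_finrank_eq,
    Module.finrank_fintype_fun_eq_card, eq_comm]

theorem mulVec_injective_of_map {R S : Type*} [NonAssocSemiring R] [NonAssocSemiring S]
    {f : R →+* S} (hf : Injective f) {A : Matrix m n R} (hA : Injective (A.map f).mulVec) :
    Injective A.mulVec := by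
  intro v w hvw
  have h : (A.map f) *ᵥ (f ∘ v) = (A.map f) *ᵥ (f ∘ w) := by
    ext i; rw [← RingHom.map_mulVec, ← RingHom.map_mulVec, hvw]
  exact funext fun j => hf (congrFun (hA h) j)

theorem mulVec_injective_map_algebraMap {R S : Type*} [CommRing R] [CommRing S] [Algebra R S]
    [Module.Projective R S] {A : Matrix m n R} (hA : Injective A.mulVec) :
    Injective (A.map (algebraMap R S)).mulVec := by
  refine (injective_iff_map_eq_zero (A.map (algebraMap R S)).mulVecLin).2 fun v hv => ?_
  ext j
  rw [Pi.zero_apply, ← Module.forall_dual_apply_eq_zero_iff R]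
  intro φ
  -- `φ` is `R`-linear and `A` has entries in `R`, so `φ` commutes with `A`.
  have hφ : A *ᵥ (φ ∘ v) = 0 := by
    ext i
    have := congrArg φ (congrFun hv i)
    simpa [mulVec, dotProduct, Algebra.algebraMap_eq_smul_one, smul_mul_assoc] using this
  exact congrFun (hA (hφ.trans (mulVec_zero A).symm)) j

theorem mulVec_injective_map_algebraMap_of_isFractionRing {R K : Type*} [CommRing R] [CommRing K]
    [Algebra R K] [IsFractionRing R K] {A : Matrix m n R} (hA : Injective A.mulVec) :
    Injective (A.map (algebraMap R K)).mulVec := by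
  refine (injective_iff_map_eq_zero (A.map (algebraMap R K)).mulVecLin).2 fun v hv => ?_
  obtain ⟨b, hb⟩ := IsLocalization.exist_integer_multiples_of_finite (nonZeroDivisors R) v
  choose w hw using hb
  have hAw : A *ᵥ w = A *ᵥ 0 := by
    ext i
    apply IsFractionRing.injective R K
    have hbv : algebraMap R K ∘ w = (b : R) • v := funext hw
    rw [RingHom.map_mulVec, mulVec_zero, Pi.zero_apply, map_zero, hbv, mulVec_smul]
    simp [← mulVecLin_apply, hv]
  ext j
  have := hw j
  rw [hA hAw, Pi.zero_apply, map_zero, Algebra.smul_def, eq_comm] at this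
  exact (IsLocalization.map_units K b).mul_right_eq_zero.1 this

theorem mulVec_injective_map_intCast_iff {K : Type*} [Field K] [CharZero K] {A : Matrix m n ℤ} :
    Injective (A.map (Int.cast : ℤ → K)).mulVec ↔ Injective A.mulVec := by
  refine ⟨mulVec_injective_of_map (f := Int.castRingHom K) Int.cast_injective, fun hA => ?_⟩
  have hK := mulVec_injective_map_algebraMap (S := K)
    (mulVec_injective_map_algebraMap_of_isFractionRing (K := ℚ) hA)
  have hcast : (algebraMap ℚ K ∘ algebraMap ℤ ℚ) = Int.cast := funext fun z => by simp
  rwa [map_map, hcast] at hK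

end Matrix

open Matrix

section Layers

variable {ι α : Type*} [DecidableEq α] (M : Finset (ι → α))

def layerMatrix (R : Type*) [Zero R] [One R] : Matrix (ι × α) M R :=
  of fun k x => if (x : ι → α) k.1 = k.2 then 1 else 0

def IsAnnihilation {R : Type*} [AddCommMonoid R] (c : (ι → α) → R) : Prop :=
  ∀ i j, ∑ x ∈ M.filter (fun x => x i = j), c x = 0

variable {M}

theorem layerMatrix_map {R S : Type*} [NonAssocSemiring R] [NonAssocSemiring S] (f : R →+* S) :
    (layerMatrix M R).map f = layerMatrix M S := by
  ext k x
  simp [layerMatrix, apply_ite f]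

theorem vecMul_layerMatrix_apply [Fintype ι] [Fintype α] {R : Type*} [NonAssocSemiring R]
    (g : ι × α → R) (x : M) : (g ᵥ* layerMatrix M R) x = ∑ i, g (i, (x : ι → α) i) := by
  simp [vecMul, dotProduct, layerMatrix, Fintype.sum_prod_type]

theorem layerMatrix_mulVec_apply {R : Type*} [NonAssocSemiring R] (c : (ι → α) → R)
    (i : ι) (j : α) :
    (layerMatrix M R *ᵥ fun x => c x) (i, j) = ∑ x ∈ M.filter (fun x => x i = j), c x := by
  rw [Finset.sum_filter, ← Finset.sum_attach M, ← Finset.univ_eq_attach]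
  simp [mulVec, dotProduct, layerMatrix]

theorem exists_isAnnihilation_iff_not_injective {R : Type*} [CommRing R] :
    (∃ c : (ι → α) → R, (∃ x ∈ M, c x ≠ 0) ∧ IsAnnihilation M c) ↔
      ¬ Injective (layerMatrix M R).mulVec := by
  classical
  have key (c : (ι → α) → R) : IsAnnihilation M c ↔ (layerMatrix M R *ᵥ fun x => c x) = 0 := by
    simp only [funext_iff, Prod.forall, layerMatrix_mulVec_apply, IsAnnihilation, Pi.zero_apply]
  change _ ↔ ¬ Injective (layerMatrix M R).mulVecLin
  rw [injective_iff_map_eq_zero]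
  push Not
  constructor
  · rintro ⟨c, ⟨x, hx, hcx⟩, hc⟩
    exact ⟨fun x => c x, (key c).1 hc, fun h => hcx (congrFun h ⟨x, hx⟩)⟩
  · rintro ⟨v, hv, hv0⟩
    obtain ⟨⟨x, hx⟩, hvx⟩ := ne_iff.1 hv0
    refine ⟨fun x => if h : x ∈ M then v ⟨x, h⟩ else 0, ⟨x, hx, by simpa [hx] using hvx⟩,
      (key _).2 ?_⟩
    simpa using hv

end Layers

theorem isBasic_iff_vecMul_surjective {n d : ℕ} (M : Finset (Fin d → Fin n)) :
    IsBasic M ↔ Surjective (layerMatrix M ℝ).vecMul := by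
  constructor
  · intro hM h
    classical
    obtain ⟨g, hg⟩ := hM fun x => if hx : x ∈ M then h ⟨x, hx⟩ else 0
    refine ⟨fun k => g k.1 k.2, funext fun x => ?_⟩
    dsimp only
    rw [vecMul_layerMatrix_apply]
    simpa using (hg x x.2).symm
  · intro hM f
    obtain ⟨g, hg⟩ := hM fun x => f x
    refine ⟨fun i j => g (i, j), fun x hx => ?_⟩
    rw [← vecMul_layerMatrix_apply g ⟨x, hx⟩]
    exact (congrFun hg ⟨x, hx⟩).symm

/-- `M ⊆ [n]^d` is non-basic iff there exists a non-trivial annihilation function of `M`: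
an integer-valued function on `M`, not identically zero, whose sum over every layer is zero. -/
theorem nonbasic_iff_annihilation {n d : ℕ} (M : Finset (Fin d → Fin n)) :
    ¬ IsBasic M ↔
      ∃ c : (Fin d → Fin n) → ℤ,
        (∃ x ∈ M, c x ≠ 0) ∧
        ∀ (i : Fin d) (j : Fin n), ∑ x ∈ M.filter (fun x => x i = j), c x = 0 := by
  rw [isBasic_iff_vecMul_surjective, vecMul_surjective_iff_mulVec_injective,
    ← layerMatrix_map (Int.castRingHom ℝ), Int.coe_castRingHom, mulVec_injective_map_intCast_iff]
  exact exists_isAnnihilation_iff_not_injective.symm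
end

section
/- For every positive integer m there exist a positive integer n, a minimal non-basic subset M ⊆ [n]^3, and a non-trivial annihilation function f : M → ℤ of M whose values are setwise coprime (the gcd of all values is 1), such that f(X) = m for some X ∈ M. -/
lemma isBasic_of_no_annihilator {n d : ℕ} (S : Finset (Fin d → Fin n))
    (h : ∀ c : (Fin d → Fin n) → ℝ, (∀ x ∉ S, c x = 0) →
      (∀ (i : Fin d) (j : Fin n), ∑ x ∈ S.filter (fun x => x i = j), c x = 0) →
      ∀ x ∈ S, c x = 0) : IsBasic S := by
  classical
  set T : (Fin d → Fin n → ℝ) →ₗ[ℝ] ({x // x ∈ S} → ℝ) :=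
    { toFun := fun g x => ∑ i, g i (x.1 i)
      map_add' := by intro a b; funext x; simp [Finset.sum_add_distrib]
      map_smul' := by intro r a; funext x; simp [Finset.mul_sum] }
  have hT : Function.Surjective T := by
    by_contra hns
    have hlt : LinearMap.range T < ⊤ := by
      rw [lt_top_iff_ne_top]
      intro hr
      exact hns (LinearMap.range_eq_top.mp hr)
    obtain ⟨φ, φ0, hφ⟩ := (LinearMap.range T).exists_le_ker_of_lt_top hlt
    set e : {x // x ∈ S} → ({x // x ∈ S} → ℝ) := fun x y => if x = y then 1 else 0
    have hrep : ∀ v : {x // x ∈ S} → ℝ, φ v = ∑ x : {x // x ∈ S}, v x * φ (e x) := by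
      intro v
      have hv := pi_eq_sum_univ v
      conv_lhs => rw [hv]
      rw [map_sum]
      simp [e, smul_eq_mul]
    set c : (Fin d → Fin n) → ℝ := fun x => if hx : x ∈ S then φ (e ⟨x, hx⟩) else 0
    have hsupp : ∀ x ∉ S, c x = 0 := by intro x hx; simp [c, hx]
    have hplane : ∀ (i : Fin d) (j : Fin n), ∑ x ∈ S.filter (fun x => x i = j), c x = 0 := by
      intro i j
      set g : Fin d → Fin n → ℝ := fun i' j' => if i' = i then (if j' = j then 1 else 0) else 0
      have hTg : ∀ x : {x // x ∈ S}, T g x = if x.1 i = j then 1 else 0 := by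
        intro x
        show (∑ i', if i' = i then (if x.1 i' = j then (1:ℝ) else 0) else 0) = _
        rw [Finset.sum_ite_eq' Finset.univ i (fun i' => if x.1 i' = j then (1:ℝ) else 0)]
        simp
      have h0 : φ (T g) = 0 := hφ ⟨g, rfl⟩
      rw [hrep] at h0
      have heq : ∑ x ∈ S.attach, (if x.1 i = j then c x.1 else 0)
          = ∑ x : {x // x ∈ S}, T g x * φ (e x) := by
        rw [Finset.univ_eq_attach]
        apply Finset.sum_congr rfl
        intro x _
        rw [hTg x]
        by_cases hxj : x.1 i = j <;> simp [hxj, c, x.2]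
      rw [Finset.sum_filter, ← Finset.sum_attach S (fun x => if x i = j then c x else 0), heq, h0]
    have hzero := h c hsupp hplane
    apply φ0
    apply LinearMap.ext
    intro v
    rw [hrep]
    rw [LinearMap.zero_apply]
    apply Finset.sum_eq_zero
    intro x _
    have := hzero x.1 x.2
    simp only [c, dif_pos x.2] at this
    simp [this]
  intro f
  obtain ⟨g, hg⟩ := hT (fun x => f x.1)
  exact ⟨g, fun x hx => (congrFun hg ⟨x, hx⟩).symm⟩


abbrev Idx (m : ℕ) := Fin m ⊕ Fin m ⊕ Fin 2

def pm (m : ℕ) : Idx m → (Fin 3 → Fin (m+1))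
  | .inl k => ![k.succ, k.succ, 0]
  | .inr (.inl k) => ![k.succ, if k.val = 0 then Fin.last m else k.castSucc, 1]
  | .inr (.inr r) => ![0, 0, if r.val = 0 then 0 else 1]

def ff (m : ℕ) : (Fin 3 → Fin (m+1)) → ℤ := fun x =>
  if x 0 = 0 then (if x 2 = 0 then -(m:ℤ) else m) else (if x 2 = 0 then 1 else -1)

section facts
variable {m : ℕ}

lemma fin_one_ne_zero (hm : 0 < m) : (1 : Fin (m+1)) ≠ 0 := by
  rw [Fin.ne_iff_vne]
  simp [Fin.val_one']
  omega

lemma pm_inj (hm : 0 < m) : Function.Injective (pm m) := by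
  intro a b h
  have h0 := congrFun h 0
  have h2 := congrFun h 2
  rcases a with k | k | r <;> rcases b with k' | k' | r' <;>
    simp [pm, Matrix.cons_val_zero, Matrix.cons_val_one] at h0 h2 ⊢ <;>
    first
      | exact h0
      | omega
      | exact Fin.succ_ne_zero _ h0
      | exact Fin.succ_ne_zero _ h0.symm
      | (fin_cases r <;> fin_cases r' <;> simp_all [Fin.ext_iff, Fin.val_one'] <;> omega)

def yw (m : ℕ) (k : Fin m) : Fin (m+1) := if k.val = 0 then Fin.last m else k.castSucc

lemma pm_w_one (k : Fin m) : pm m (.inr (.inl k)) 1 = yw m k := by simp [pm, yw]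

end facts
section facts2
variable {m : ℕ}

variable [NeZero m]

lemma yw_add_one (k : Fin m) : yw m (k + 1) = k.succ := by
  have hm : 0 < m := Nat.pos_of_ne_zero (NeZero.ne m)
  have hv : ((k + 1 : Fin m) : ℕ) = (k.val + 1 % m) % m := by
    rw [Fin.val_add, Fin.val_one']
  rcases Nat.lt_or_ge (k.val + 1) m with h | h
  · have h1 : 1 % m = 1 := Nat.mod_eq_of_lt (by omega)
    have : ((k + 1 : Fin m) : ℕ) = k.val + 1 := by rw [hv, h1, Nat.mod_eq_of_lt h]
    rw [yw]
    rw [if_neg (by omega)]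
    rw [Fin.ext_iff, Fin.coe_castSucc, Fin.val_succ, this]
  · have hk : k.val = m - 1 := by have := k.isLt; omega
    have : ((k + 1 : Fin m) : ℕ) = 0 := by
      rcases Nat.eq_or_lt_of_le hm with h1 | h1
      · subst h1; rw [hv]; simp
      · have h1' : 1 % m = 1 := Nat.mod_eq_of_lt (by omega)
        rw [hv, h1', hk]
        have : m - 1 + 1 = m := by omega
        rw [this, Nat.mod_self]
    rw [yw, if_pos this, Fin.ext_iff, Fin.val_last, Fin.val_succ]
    have := k.isLt; omega

lemma yw_inj : Function.Injective (yw m) := by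
  intro a b h
  rw [yw, yw] at h
  rw [Fin.ext_iff] at h ⊢
  by_cases ha : a.val = 0 <;> by_cases hb : b.val = 0 <;>
    simp [ha, hb, Fin.val_last, Fin.coe_castSucc] at h ⊢ <;>
    [skip; skip; skip] <;> omega

lemma yw_eq_succ_iff (k k' : Fin m) : yw m k' = k.succ ↔ k' = k + 1 := by
  constructor
  · intro h
    apply yw_inj (m := m)
    rw [h, yw_add_one]
  · rintro rfl
    exact yw_add_one k

lemma annihilator_structure (c : (Fin 3 → Fin (m+1)) → ℝ)
    (hann : ∀ (i : Fin 3) (j : Fin (m+1)),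
      ∑ k : Idx m, (if pm m k i = j then c (pm m k) else 0) = 0) :
    ∃ t : ℝ, (∀ k : Fin m, c (pm m (.inl k)) = t) ∧
      (∀ k : Fin m, c (pm m (.inr (.inl k))) = -t) ∧
      c (pm m (.inr (.inr 0))) = -(m:ℝ) * t ∧
      c (pm m (.inr (.inr 1))) = (m:ℝ) * t := by
  have hm : 0 < m := Nat.pos_of_ne_zero (NeZero.ne m)
  have E1 : ∀ k : Fin m, c (pm m (.inl k)) + c (pm m (.inr (.inl k))) = 0 := by
    intro k
    have h := hann 0 k.succ
    rw [Fintype.sum_sum_type, Fintype.sum_sum_type, Fin.sum_univ_two] at h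
    simpa [pm, Fin.succ_inj, Ne.symm (Fin.succ_ne_zero k)] using h
  have E2 : ∀ k : Fin m, c (pm m (.inl k)) + c (pm m (.inr (.inl (k+1)))) = 0 := by
    intro k
    have h := hann 1 k.succ
    rw [Fintype.sum_sum_type, Fintype.sum_sum_type, Fin.sum_univ_two] at h
    have hyw : ∀ k' : Fin m, pm m (.inr (.inl k')) 1 = yw m k' := fun k' => pm_w_one k'
    simp only [hyw] at h
    simpa [pm, Fin.succ_inj, yw_eq_succ_iff, Ne.symm (Fin.succ_ne_zero k)] using h
  have E3 : c (pm m (.inr (.inr 0))) + c (pm m (.inr (.inr 1))) = 0 := by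
    have h := hann 0 0
    rw [Fintype.sum_sum_type, Fintype.sum_sum_type, Fin.sum_univ_two] at h
    simpa [pm, Fin.succ_ne_zero] using h
  have E4 : (∑ k : Fin m, c (pm m (.inl k))) + c (pm m (.inr (.inr 0))) = 0 := by
    have h := hann 2 0
    rw [Fintype.sum_sum_type, Fintype.sum_sum_type, Fin.sum_univ_two] at h
    simpa [pm, fin_one_ne_zero hm] using h
  have hstep : ∀ k : Fin m, c (pm m (.inl (k+1))) = c (pm m (.inl k)) := by
    intro k
    have e1 := E1 (k+1)
    have e2 := E2 k
    linarith
  have key : ∀ r (hr : r < m), c (pm m (.inl ⟨r, hr⟩)) = c (pm m (.inl ⟨0, hm⟩)) := by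
    intro r
    induction r with
    | zero => intro hr; rfl
    | succ r ih =>
      intro hr
      have hr' : r < m := by omega
      have heq : (⟨r, hr'⟩ + 1 : Fin m) = ⟨r+1, hr⟩ := by
        rw [Fin.ext_iff, Fin.val_add, Fin.val_one']
        have h1 : 1 % m = 1 := Nat.mod_eq_of_lt (by omega)
        rw [h1]
        exact Nat.mod_eq_of_lt hr
      rw [← heq, hstep ⟨r, hr'⟩, ih hr']
  set t := c (pm m (.inl ⟨0, hm⟩)) with ht
  have hconst : ∀ k : Fin m, c (pm m (.inl k)) = t := fun k => key k.val k.isLt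
  have hsum : ∑ k : Fin m, c (pm m (.inl k)) = (m : ℝ) * t := by
    rw [Finset.sum_congr rfl (fun k _ => hconst k)]
    simp [Finset.sum_const, Finset.card_univ, nsmul_eq_mul]
  refine ⟨t, hconst, fun k => by have := E1 k; have := hconst k; linarith, ?_, ?_⟩
  · rw [hsum] at E4; linarith
  · rw [hsum] at E4; linarith

lemma ffu (hm : 0 < m) (k : Fin m) : ff m (pm m (.inl k)) = 1 := by
  simp [ff, pm, Fin.succ_ne_zero]

lemma ffw (hm : 0 < m) (k : Fin m) : ff m (pm m (.inr (.inl k))) = -1 := by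
  simp [ff, pm, Fin.succ_ne_zero, fin_one_ne_zero hm]

lemma ffU (hm : 0 < m) : ff m (pm m (.inr (.inr 0))) = -(m:ℤ) := by
  simp [ff, pm]

lemma ffW (hm : 0 < m) : ff m (pm m (.inr (.inr 1))) = (m:ℤ) := by
  simp [ff, pm, fin_one_ne_zero hm]

lemma hpair {P : Prop} [Decidable P] (a : ℤ) :
    ((if P then a else 0) + (if P then -a else 0)) = 0 := by
  by_cases h : P <;> simp [h]

lemma ff_plane0 [NeZero m] (j : Fin (m+1)) :
    ∑ k : Idx m, (if pm m k 0 = j then ff m (pm m k) else 0) = 0 := by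
  have hm : 0 < m := Nat.pos_of_ne_zero (NeZero.ne m)
  rw [Fintype.sum_sum_type, Fintype.sum_sum_type, Fin.sum_univ_two]
  simp only [ffu hm, ffw hm, ffU hm, ffW hm]
  have hS : ∀ k : Fin m, pm m (.inl k) 0 = k.succ := fun k => by simp [pm]
  have hS' : ∀ k : Fin m, pm m (.inr (.inl k)) 0 = k.succ := fun k => by simp [pm]
  have hT0 : pm m (.inr (.inr 0)) 0 = 0 := by simp [pm]
  have hT1 : pm m (.inr (.inr 1)) 0 = 0 := by simp [pm]
  simp only [hS, hS', hT0, hT1]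
  have h12 : (∑ k : Fin m, if k.succ = j then (1:ℤ) else 0)
      + (∑ k : Fin m, if k.succ = j then (-1:ℤ) else 0) = 0 := by
    rw [← Finset.sum_add_distrib]
    exact Finset.sum_eq_zero fun k _ => hpair 1
  have hT := hpair (P := (0 : Fin (m+1)) = j) (-(m:ℤ))
  rw [neg_neg] at hT
  omega

lemma ff_plane1 [NeZero m] (j : Fin (m+1)) :
    ∑ k : Idx m, (if pm m k 1 = j then ff m (pm m k) else 0) = 0 := by
  have hm : 0 < m := Nat.pos_of_ne_zero (NeZero.ne m)
  rw [Fintype.sum_sum_type, Fintype.sum_sum_type, Fin.sum_univ_two]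
  simp only [ffu hm, ffw hm, ffU hm, ffW hm]
  have hS : ∀ k : Fin m, pm m (.inl k) 1 = k.succ := fun k => by simp [pm]
  have hT0 : pm m (.inr (.inr 0)) 1 = 0 := by simp [pm]
  have hT1 : pm m (.inr (.inr 1)) 1 = 0 := by simp [pm]
  simp only [hS, pm_w_one, hT0, hT1]
  have hrei : (∑ k : Fin m, if k.succ = j then (-1:ℤ) else 0)
      = ∑ k : Fin m, if yw m k = j then (-1:ℤ) else 0 := by
    apply Fintype.sum_equiv (Equiv.addRight (1 : Fin m))
    intro k
    simp only [Equiv.coe_addRight]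
    simp only [yw_add_one]
  rw [← hrei]
  have h12 : (∑ k : Fin m, if k.succ = j then (1:ℤ) else 0)
      + (∑ k : Fin m, if k.succ = j then (-1:ℤ) else 0) = 0 := by
    rw [← Finset.sum_add_distrib]
    exact Finset.sum_eq_zero fun k _ => hpair 1
  have hT := hpair (P := (0 : Fin (m+1)) = j) (-(m:ℤ))
  rw [neg_neg] at hT
  omega

lemma ff_plane2 [NeZero m] (j : Fin (m+1)) :
    ∑ k : Idx m, (if pm m k 2 = j then ff m (pm m k) else 0) = 0 := by
  have hm : 0 < m := Nat.pos_of_ne_zero (NeZero.ne m)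
  rw [Fintype.sum_sum_type, Fintype.sum_sum_type, Fin.sum_univ_two]
  simp only [ffu hm, ffw hm, ffU hm, ffW hm]
  have hS : ∀ k : Fin m, pm m (.inl k) 2 = 0 := fun k => by simp [pm]
  have hS' : ∀ k : Fin m, pm m (.inr (.inl k)) 2 = 1 := fun k => by simp [pm]
  have hT0 : pm m (.inr (.inr 0)) 2 = 0 := by simp [pm]
  have hT1 : pm m (.inr (.inr 1)) 2 = 1 := by simp [pm]
  simp only [hS, hS', hT0, hT1]
  by_cases h0 : (0 : Fin (m+1)) = j <;> by_cases h1 : (1 : Fin (m+1)) = j <;>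
    simp [h0, h1, Finset.sum_const, Finset.card_univ] <;> push_cast <;> ring

lemma ff_plane [NeZero m] (i : Fin 3) (j : Fin (m+1)) :
    ∑ k : Idx m, (if pm m k i = j then ff m (pm m k) else 0) = 0 := by
  fin_cases i
  · exact ff_plane0 j
  · exact ff_plane1 j
  · exact ff_plane2 j

lemma sum_M_filter {β : Type*} [AddCommMonoid β] (hm : 0 < m)
    (P : (Fin 3 → Fin (m+1)) → Prop) [DecidablePred P] (F : (Fin 3 → Fin (m+1)) → β) :
    ∑ x ∈ (Finset.image (pm m) Finset.univ).filter P, F x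
      = ∑ k : Idx m, (if P (pm m k) then F (pm m k) else 0) := by
  rw [Finset.sum_filter, Finset.sum_image (fun a _ b _ h => pm_inj hm h)]

end facts2


/-- For every positive integer `m` there are a positive integer `n`, a minimal non-basic
subset `M ⊆ [n]^3` and a non-trivial annihilation function `f` of `M` with setwise coprime
values (irreducible) taking the value `m` at some point of `M`. -/
theorem irreducible_annihilation_unbounded (m : ℕ) (hm : 0 < m) :
    ∃ (n : ℕ), 0 < n ∧ ∃ M : Finset (Fin 3 → Fin n),
      ¬ IsBasic M ∧ (∀ K ⊂ M, IsBasic K) ∧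
      ∃ f : (Fin 3 → Fin n) → ℤ,
        (∀ (i : Fin 3) (j : Fin n), ∑ x ∈ M.filter (fun x => x i = j), f x = 0) ∧
        (∃ x ∈ M, f x ≠ 0) ∧
        M.gcd f = 1 ∧
        ∃ X ∈ M, f X = (m : ℤ) := by
  classical
  haveI : NeZero m := ⟨hm.ne'⟩
  set M : Finset (Fin 3 → Fin (m+1)) := Finset.image (pm m) Finset.univ with hM
  have hmemM : ∀ k : Idx m, pm m k ∈ M := fun k => Finset.mem_image_of_mem _ (Finset.mem_univ k)
  have hMmem : ∀ x ∈ M, ∃ k, pm m k = x := by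
    intro x hx
    obtain ⟨k, _, hk⟩ := Finset.mem_image.mp hx
    exact ⟨k, hk⟩
  have hplaneM : ∀ (i : Fin 3) (j : Fin (m+1)),
      ∑ x ∈ M.filter (fun x => x i = j), ff m x = 0 := by
    intro i j
    rw [hM, sum_M_filter hm]
    exact ff_plane i j
  refine ⟨m+1, Nat.succ_pos m, M, ?_, ?_, ff m, hplaneM, ?_, ?_, ?_⟩
  · -- not basic
    intro hb
    obtain ⟨g, hg⟩ := hb (fun x => (ff m x : ℝ))
    have hA1 : ∑ x ∈ M, (ff m x : ℝ) * (ff m x : ℝ)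
        = ∑ x ∈ M, (ff m x : ℝ) * ∑ i, g i (x i) := by
      apply Finset.sum_congr rfl
      intro x hx
      rw [← hg x hx]
    have inner : ∀ (i : Fin 3), ∑ x ∈ M, (ff m x : ℝ) * g i (x i) = 0 := by
      intro i
      rw [← Finset.sum_fiberwise M (fun x => x i) (fun x => (ff m x : ℝ) * g i (x i))]
      apply Finset.sum_eq_zero
      intro j _
      have hcongr : ∑ x ∈ M.filter (fun x => x i = j), (ff m x : ℝ) * g i (x i)
          = ∑ x ∈ M.filter (fun x => x i = j), (ff m x : ℝ) * g i j := by
        apply Finset.sum_congr rfl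
        intro x hx
        rw [(Finset.mem_filter.mp hx).2]
      rw [hcongr, ← Finset.sum_mul]
      have hc : ∑ x ∈ M.filter (fun x => x i = j), (ff m x : ℝ) = 0 := by
        exact_mod_cast congrArg (Int.cast : ℤ → ℝ) (hplaneM i j)
      rw [hc, zero_mul]
    have hA2 : ∑ x ∈ M, (ff m x : ℝ) * ∑ i, g i (x i) = 0 := by
      have hsplit : ∑ x ∈ M, (ff m x : ℝ) * ∑ i, g i (x i)
          = ∑ i : Fin 3, ∑ x ∈ M, (ff m x : ℝ) * g i (x i) := by
        rw [Finset.sum_comm]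
        apply Finset.sum_congr rfl
        intro x _
        rw [Finset.mul_sum]
      rw [hsplit]
      exact Finset.sum_eq_zero fun i _ => inner i
    have hpos : (1:ℝ) ≤ ∑ x ∈ M, (ff m x : ℝ) * (ff m x : ℝ) := by
      have hx0 : pm m (.inl ⟨0, hm⟩) ∈ M := hmemM _
      have hnn : ∀ x ∈ M, (0:ℝ) ≤ (ff m x : ℝ) * (ff m x : ℝ) := fun x _ => mul_self_nonneg _
      calc (1:ℝ) = (ff m (pm m (.inl ⟨0,hm⟩)) : ℝ) * (ff m (pm m (.inl ⟨0,hm⟩)) : ℝ) := by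
            rw [ffu hm]; norm_num
        _ ≤ _ := Finset.single_le_sum hnn hx0
    rw [hA1, hA2] at hpos
    linarith
  · -- minimality
    intro K hK
    obtain ⟨x₀, hx₀M, hx₀K⟩ := Finset.exists_of_ssubset hK
    have hKsub : K ⊆ M.erase x₀ := Finset.subset_erase.mpr ⟨hK.subset, hx₀K⟩
    have hbasic : IsBasic (M.erase x₀) := by
      apply isBasic_of_no_annihilator
      intro c hsupp hplane x hx
      have hc0 : c x₀ = 0 := hsupp x₀ (Finset.notMem_erase x₀ M)
      have hannM : ∀ (i : Fin 3) (j : Fin (m+1)),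
          ∑ y ∈ M.filter (fun y => y i = j), c y = 0 := by
        intro i j
        have hins : M = insert x₀ (M.erase x₀) := (Finset.insert_erase hx₀M).symm
        rw [hins, Finset.filter_insert]
        by_cases h : x₀ i = j
        · rw [if_pos h, Finset.sum_insert
            (fun hmem => (Finset.notMem_erase x₀ M) (Finset.mem_of_mem_filter _ hmem)),
            hc0, zero_add]
          exact hplane i j
        · rw [if_neg h]
          exact hplane i j
      have hannI : ∀ (i : Fin 3) (j : Fin (m+1)),
          ∑ k : Idx m, (if pm m k i = j then c (pm m k) else 0) = 0 := by
        intro i j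
        rw [← sum_M_filter hm (fun x => x i = j) c]
        exact hannM i j
      obtain ⟨t, hu, hw, hU, hW⟩ := annihilator_structure c hannI
      obtain ⟨k₀, hk₀⟩ := hMmem x₀ hx₀M
      have hcx₀ : c (pm m k₀) = 0 := by rw [hk₀]; exact hc0
      have hm' : (m:ℝ) ≠ 0 := Nat.cast_ne_zero.mpr hm.ne'
      have ht : t = 0 := by
        rcases k₀ with k | k | r
        · rw [hu k] at hcx₀; exact hcx₀
        · rw [hw k] at hcx₀; linarith
        · have h2 : r = 0 ∨ r = 1 := by
            rcases r with ⟨rv, hr⟩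
            interval_cases rv
            · exact Or.inl rfl
            · exact Or.inr rfl
          rcases h2 with rfl | rfl
          · rw [hU] at hcx₀
            have hmt : (m:ℝ) * t = 0 := by linarith
            exact (mul_eq_zero.mp hmt).resolve_left hm'
          · rw [hW] at hcx₀
            exact (mul_eq_zero.mp hcx₀).resolve_left hm'
      obtain ⟨k, hk⟩ := hMmem x (Finset.mem_of_mem_erase hx)
      rw [← hk]
      rcases k with k | k | r
      · rw [hu k, ht]
      · rw [hw k, ht, neg_zero]
      · have h2 : r = 0 ∨ r = 1 := by
          rcases r with ⟨rv, hr⟩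
          interval_cases rv
          · exact Or.inl rfl
          · exact Or.inr rfl
        rcases h2 with rfl | rfl
        · rw [hU, ht, mul_zero]
        · rw [hW, ht, mul_zero]
    intro f
    obtain ⟨g, hg⟩ := hbasic f
    exact ⟨g, fun x hx => hg x (hKsub hx)⟩
  · refine ⟨pm m (.inr (.inr 1)), hmemM _, ?_⟩
    rw [ffW hm]
    exact_mod_cast hm.ne'
  · have h1 : ff m (pm m (.inl ⟨0, hm⟩)) = 1 := ffu hm _
    have hd : M.gcd (ff m) ∣ 1 := h1 ▸ Finset.gcd_dvd (hmemM (.inl ⟨0, hm⟩))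
    rcases Int.isUnit_iff.mp (isUnit_of_dvd_one hd) with h | h
    · exact h
    · have hn := Finset.normalize_gcd (s := M) (f := ff m)
      rw [h, Int.normalize_of_nonpos (by norm_num)] at hn
      norm_num at hn
  · exact ⟨pm m (.inr (.inr 1)), hmemM _, ffW hm⟩
end

section
/- Every annihilation function of [n]^d (a function F : [n]^d → ℤ such that the sum of F over every layer is zero) can be written as a finite sum of simple annihilation functions, equivalently as an integer linear combination of simple annihilation functions. -/
/-- The integer indicator function of a point `P` of the cube `[n]^d`. -/
def indic {n d : ℕ} (P : Fin d → Fin n) : (Fin d → Fin n) → ℤ :=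
  fun x => if x = P then 1 else 0

/-- A *simple annihilation function* is `1_P − 1_Q + 1_R − 1_S` where `P,Q,R,S` are the
consecutive vertices of a rectangle with sides parallel to two coordinate axes `i ≠ j`:
`Q = P` with coordinate `i` changed to `b ≠ P i`, `S = P` with coordinate `j` changed to
`e ≠ P j`, and `R` has both changes. -/
def IsSimpleAnnihilation {n d : ℕ} (f : (Fin d → Fin n) → ℤ) : Prop :=
  ∃ (i j : Fin d) (P : Fin d → Fin n) (b e : Fin n),
    i ≠ j ∧ P i ≠ b ∧ P j ≠ e ∧
    f = fun x => indic P x - indic (Function.update P i b) x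
        + indic (Function.update (Function.update P i b) j e) x
        - indic (Function.update P j e) x

/-!
Let `S` be the subgroup generated by the simple annihilation functions and fix a base point
`z = (0, …, 0)`. If `x` has at least two coordinates `i ≠ j` different from `0`, the rectangle
through `x` obtained by setting those coordinates to `0` shows that `1_x` is congruent modulo `S`
to a combination of indicators of points with fewer nonzero coordinates. By induction every
function is congruent modulo `S` to one supported on points with at most one nonzero coordinate.
Since elements of `S` are annihilation functions, such a representative of an annihilation
function is itself one, and the layer sums then force it to vanish: first at the points with one
nonzero coordinate `i` (alone in their `i`-layer), then at the base point.
-/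

open Finset Function

theorem AddSubgroup.exists_fin_sum_of_mem_closure {M : Type*} [AddCommGroup M] {s : Set M}
    (hs : ∀ x ∈ s, -x ∈ s) {x : M} (hx : x ∈ AddSubgroup.closure s) :
    ∃ (k : ℕ) (f : Fin k → M), (∀ t, f t ∈ s) ∧ x = ∑ t, f t := by
  have hneg : s ∪ -s = s := Set.union_eq_left.mpr fun y hy => by simpa using hs _ hy
  rw [← AddSubgroup.mem_toAddSubmonoid, AddSubgroup.closure_toAddSubmonoid, hneg] at hx
  obtain ⟨l, hl, rfl⟩ := AddSubmonoid.exists_list_of_mem_closure hx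
  exact ⟨l.length, fun t => l[t], fun t => hl _ (List.getElem_mem _), by simp⟩

section Hamming

variable {ι α : Type*} [Fintype ι] [DecidableEq α]

theorem hammingDist_update_lt [DecidableEq ι] {x y : ι → α} {i : ι} (h : x i ≠ y i) :
    hammingDist (update x i (y i)) y < hammingDist x y := by
  unfold hammingDist
  apply card_lt_card
  refine ⟨fun l => ?_, fun hsub => by simpa using hsub (mem_filter.mpr ⟨mem_univ i, h⟩)⟩
  by_cases hl : l = i <;> simp [hl, update_apply]

theorem apply_eq_of_hammingDist_le_one {x : ι → α} {z : α} (hx : hammingDist x (fun _ => z) ≤ 1)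
    {i l : ι} (hi : x i ≠ z) (hl : l ≠ i) : x l = z := by
  by_contra h
  exact hl (card_le_one.mp hx l (by simpa using h) i (by simpa using hi))

theorem eq_of_hammingDist_le_one {x y : ι → α} {z : α} (hx : hammingDist x (fun _ => z) ≤ 1)
    (hy : hammingDist y (fun _ => z) ≤ 1) {i : ι} (hxy : x i = y i) (hi : x i ≠ z) : x = y := by
  funext l
  by_cases hl : l = i
  · rw [hl, hxy]
  · rw [apply_eq_of_hammingDist_le_one hx hi hl, apply_eq_of_hammingDist_le_one hy (hxy ▸ hi) hl]

end Hamming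

section Annihilation

variable {ι α : Type*} [Fintype ι] [DecidableEq ι] [Fintype α] [DecidableEq α]

def annihilationSubgroup : AddSubgroup ((ι → α) → ℤ) where
  carrier := {F | ∀ i a, ∑ x ∈ univ.filter (fun x : ι → α => x i = a), F x = 0}
  add_mem' hF hG i a := by simp [sum_add_distrib, hF i a, hG i a]
  zero_mem' := by simp
  neg_mem' hF i a := by simp [hF i a]

def supportedOnUnitHammingBall (z : α) : AddSubgroup ((ι → α) → ℤ) where
  carrier := {F | ∀ x, 1 < hammingDist x (fun _ => z) → F x = 0}
  add_mem' hF hG x hx := by simp [hF x hx, hG x hx]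
  zero_mem' := by simp
  neg_mem' hF x hx := by simp [hF x hx]

theorem eq_zero_of_mem_annihilationSubgroup_of_mem_supportedOnUnitHammingBall [Nonempty ι]
    {z : α} {F : (ι → α) → ℤ} (hA : F ∈ annihilationSubgroup)
    (hB : F ∈ supportedOnUnitHammingBall z) : F = 0 := by
  have off_base : ∀ y, y ≠ (fun _ => z) → F y = 0 := by
    intro y hy
    obtain ⟨i, hi⟩ := Function.ne_iff.mp hy
    rcases le_or_gt (hammingDist y (fun _ => z)) 1 with hy1 | hy1
    · rw [← hA i (y i)]
      refine (sum_eq_single_of_mem y (by simp) fun x hx hxy => ?_).symm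
      by_contra hFx
      have hx1 : hammingDist x (fun _ => z) ≤ 1 := not_lt.mp (mt (hB x) hFx)
      have hxi : x i = y i := (mem_filter.mp hx).2
      exact hxy (eq_of_hammingDist_le_one hx1 hy1 hxi (hxi ▸ hi))
    · exact hB y hy1
  funext y
  by_cases hy : y = fun _ => z
  · subst hy
    rw [Pi.zero_apply, ← hA (Classical.arbitrary ι) z]
    exact (sum_eq_single_of_mem _ (by simp) fun x _ hx => off_base x hx).symm
  · exact off_base y hy

end Annihilation

section Simple

variable {n d : ℕ}

theorem IsSimpleAnnihilation.neg {f : (Fin d → Fin n) → ℤ} (hf : IsSimpleAnnihilation f) :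
    IsSimpleAnnihilation (-f) := by
  obtain ⟨i, j, P, b, e, hij, hb, he, rfl⟩ := hf
  -- the same rectangle, traversed from its second vertex
  refine ⟨i, j, update P i b, P i, e, hij, by simp [Ne.symm hb],
    by rwa [update_of_ne (Ne.symm hij)], ?_⟩
  rw [update_idem, update_eq_self]
  funext y
  simp only [Pi.neg_apply]
  ring

theorem sum_filter_indic (P : Fin d → Fin n) (l : Fin d) (m : Fin n) :
    ∑ x ∈ univ.filter (fun x : Fin d → Fin n => x l = m), indic P x = if P l = m then 1 else 0 := by
  simp [indic, sum_ite_eq']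

theorem IsSimpleAnnihilation.mem_annihilationSubgroup {f : (Fin d → Fin n) → ℤ}
    (hf : IsSimpleAnnihilation f) : f ∈ annihilationSubgroup := by
  obtain ⟨i, j, P, b, e, hij, hb, he, rfl⟩ := hf
  intro l m
  simp only [sum_sub_distrib, sum_add_distrib, sum_filter_indic, update_apply]
  by_cases hli : l = i <;> by_cases hlj : l = j
  · exact absurd (hli ▸ hlj) hij
  all_goals simp [hli, hlj, hij, Ne.symm hij]

abbrev simpleSpan : AddSubgroup ((Fin d → Fin n) → ℤ) :=
  AddSubgroup.closure {f | IsSimpleAnnihilation f}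

theorem simpleSpan_le_annihilationSubgroup :
    (simpleSpan : AddSubgroup ((Fin d → Fin n) → ℤ)) ≤ annihilationSubgroup :=
  (AddSubgroup.closure_le _).mpr fun _ hf => hf.mem_annihilationSubgroup

theorem indic_mem_simpleSpan_sup (z : Fin n) (x : Fin d → Fin n) :
    indic x ∈ simpleSpan ⊔ supportedOnUnitHammingBall z := by
  induction hk : hammingDist x (fun _ => z) using Nat.strong_induction_on generalizing x with
  | _ k ih =>
  rcases le_or_gt k 1 with hk1 | hk1
  · refine AddSubgroup.mem_sup_right fun y hy => if_neg fun hyx => ?_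
    subst hyx
    omega
  obtain ⟨i, hi, j, hj, hij⟩ := one_lt_card.mp (hk ▸ hk1)
  replace hi : x i ≠ z := (mem_filter.mp hi).2
  replace hj : x j ≠ z := (mem_filter.mp hj).2
  set R : (Fin d → Fin n) → ℤ := fun y => indic x y - indic (update x i z) y
    + indic (update (update x i z) j z) y - indic (update x j z) y with hR_def
  have hR : IsSimpleAnnihilation R := ⟨i, j, x, z, z, hij, hi, hj, rfl⟩
  have hxi := hammingDist_update_lt (y := fun _ => z) hi
  have hxj := hammingDist_update_lt (y := fun _ => z) hj
  have hxij := hammingDist_update_lt (x := update x i z) (y := fun _ => z) (i := j)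
    (by rwa [update_of_ne (Ne.symm hij)])
  -- the three corners of the rectangle other than `x` are closer to the base point
  have hx : indic x = R + indic (update x i z) + indic (update x j z)
      - indic (update (update x i z) j z) := by
    funext y
    simp only [hR_def, Pi.add_apply, Pi.sub_apply]
    ring
  rw [hx]
  exact sub_mem (add_mem (add_mem (AddSubgroup.mem_sup_left (AddSubgroup.subset_closure hR))
    (ih _ (hk ▸ hxi) _ rfl)) (ih _ (hk ▸ hxj) _ rfl)) (ih _ (by omega) _ rfl)

theorem mem_simpleSpan_of_mem_annihilationSubgroup (hn : 0 < n) (hd : 0 < d)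
    {F : (Fin d → Fin n) → ℤ} (hF : F ∈ annihilationSubgroup) : F ∈ simpleSpan := by
  have : Nonempty (Fin d) := ⟨⟨0, hd⟩⟩
  let z : Fin n := ⟨0, hn⟩
  have hF_eq : F = ∑ x, F x • indic x := by
    funext y
    simp [indic]
  have hsup : F ∈ simpleSpan ⊔ supportedOnUnitHammingBall z :=
    hF_eq ▸ sum_mem fun x _ => zsmul_mem (indic_mem_simpleSpan_sup z x) _
  obtain ⟨s, hs, r, hr, rfl⟩ := AddSubgroup.mem_sup.mp hsup
  have hrA : r ∈ annihilationSubgroup := by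
    simpa using sub_mem hF (simpleSpan_le_annihilationSubgroup hs)
  rwa [eq_zero_of_mem_annihilationSubgroup_of_mem_supportedOnUnitHammingBall hrA hr, add_zero]

end Simple

/-- Every annihilation function of `[n]^d` (an integer-valued function whose sum over every
layer is zero) is a finite sum of simple annihilation functions. -/
theorem annihilation_eq_sum_simple {n d : ℕ} (hn : 0 < n) (hd : 2 ≤ d)
    (F : (Fin d → Fin n) → ℤ)
    (hF : ∀ (i : Fin d) (j : Fin n),
      ∑ x ∈ Finset.univ.filter (fun x : Fin d → Fin n => x i = j), F x = 0) :
    ∃ (k : ℕ) (s : Fin k → ((Fin d → Fin n) → ℤ)),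
      (∀ t, IsSimpleAnnihilation (s t)) ∧ F = ∑ t, s t :=
  AddSubgroup.exists_fin_sum_of_mem_closure (fun _ hf => hf.neg)
    (mem_simpleSpan_of_mem_annihilationSubgroup hn (by omega) hF)
end

section
/- A subset M ⊆ [n]^d is basic if for every non-empty subset K ⊆ M there is a layer of [n]^d containing exactly one element of K. -/
/-- `M ⊆ [n]^d` is basic if every non-empty subset `K ⊆ M` has a layer containing exactly
one element of `K`. -/
theorem isBasic_of_layer_singleton {n d : ℕ} (M : Finset (Fin d → Fin n))
    (h : ∀ K ⊆ M, K.Nonempty →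
      ∃ (i : Fin d) (j : Fin n), (K.filter (fun x => x i = j)).card = 1) :
    IsBasic M := by
  classical
  unfold IsBasic
  revert h
  induction M using Finset.strongInduction with
  | _ M ih =>
    intro h f
    by_cases hM : M.Nonempty
    · obtain ⟨i, j, hcard⟩ := h M le_rfl hM
      obtain ⟨x₀, hx₀⟩ := Finset.card_eq_one.mp hcard
      have hx₀mem : x₀ ∈ M.filter (fun x => x i = j) := hx₀ ▸ Finset.mem_singleton_self x₀
      have hx₀M : x₀ ∈ M := (Finset.mem_filter.mp hx₀mem).1
      have hx₀j : x₀ i = j := (Finset.mem_filter.mp hx₀mem).2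
      have hsub : M.erase x₀ ⊂ M := Finset.erase_ssubset hx₀M
      obtain ⟨g, hg⟩ := ih (M.erase x₀) hsub
        (fun K hK hKne => h K (hK.trans (Finset.erase_subset _ _)) hKne) f
      set c : ℝ := f x₀ - ∑ k ∈ Finset.univ.erase i, g k (x₀ k) with hc
      refine ⟨Function.update g i (Function.update (g i) j c), ?_⟩
      intro x hx
      by_cases hxx : x = x₀
      · subst hxx
        rw [← Finset.add_sum_erase _ _ (Finset.mem_univ i)]
        have h1 : Function.update g i (Function.update (g i) j c) i (x i) = c := by
          simp [Function.update_self, hx₀j]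
        have h2 : ∀ k ∈ Finset.univ.erase i,
            Function.update g i (Function.update (g i) j c) k (x k) = g k (x k) := by
          intro k hk
          rw [Function.update_of_ne (Finset.ne_of_mem_erase hk)]
        rw [h1, Finset.sum_congr rfl h2, hc]
        ring
      · have hxM' : x ∈ M.erase x₀ := Finset.mem_erase.mpr ⟨hxx, hx⟩
        have hxij : x i ≠ j := by
          intro hij
          exact hxx (Finset.mem_singleton.mp
            (hx₀ ▸ Finset.mem_filter.mpr ⟨hx, hij⟩))
        rw [hg x hxM']
        refine Finset.sum_congr rfl fun k _ => ?_
        by_cases hk : k = i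
        · subst hk
          rw [Function.update_self, Function.update_of_ne hxij]
        · rw [Function.update_of_ne hk]
    · exact ⟨fun _ _ => 0, fun x hx =>
        absurd hx (by simp [Finset.not_nonempty_iff_eq_empty.mp hM])⟩
end

section
/- Let G be a finite simple graph on vertex set V. The family of co-boundaries (δ_v)_{v ∈ V}, where δ_v : edgeSet(G) → ℝ is defined by δ_v(e) = 1 if v is an endpoint of e and δ_v(e) = 0 otherwise, is linearly independent in ℝ^{edgeSet(G)} if and only if G does not contain a bipartite connected component. -/
private lemma sum_pair_eval {V : Type*} [Fintype V] [DecidableEq V] (g : V → ℝ) (u w : V)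
    (huw : u ≠ w) :
    ∑ v, g v * (if v ∈ s(u, w) then (1 : ℝ) else 0) = g u + g w := by
  have key : ∀ v : V, g v * (if v ∈ s(u, w) then (1 : ℝ) else 0)
      = (if v = u then g v else 0) + (if v = w then g v else 0) := by
    intro v
    by_cases h1 : v = u <;> by_cases h2 : v = w <;> simp_all [Sym2.mem_iff]
  rw [Finset.sum_congr rfl fun v _ => key v, Finset.sum_add_distrib]
  simp

private lemma walk_pm {V : Type*} {G : SimpleGraph V} (g : V → ℝ)
    (h : ∀ a b : V, G.Adj a b → g a = -g b) :
    ∀ {x y : V}, G.Walk x y → (g y = g x ∨ g y = -g x) := by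
  intro x y p
  induction p with
  | nil => exact Or.inl rfl
  | cons hadj q ih =>
    rcases ih with h1 | h1
    · right; rw [h1, h _ _ hadj, neg_neg]
    · left; rw [h1, h _ _ hadj]

/-- The co-boundaries `δ_v : edgeSet G → ℝ` (with `δ_v e = 1` if `v` is an endpoint of `e`,
`0` otherwise) of the vertices of a finite simple graph `G` are linearly independent iff
`G` contains no bipartite connected component (no connected component whose induced
subgraph is 2-colorable). -/
theorem coboundaries_linearIndependent_iff_no_bipartite_component
    {V : Type*} [Fintype V] [DecidableEq V] (G : SimpleGraph V) [DecidableRel G.Adj] :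
    LinearIndependent ℝ
        (fun v : V => fun e : G.edgeSet => if v ∈ (e : Sym2 V) then (1 : ℝ) else 0) ↔
      ∀ c : G.ConnectedComponent, ¬ (G.induce c.supp).Colorable 2 := by
  rw [Fintype.linearIndependent_iff]
  constructor
  · -- linear independence → no bipartite component
    intro hind c hcol
    obtain ⟨C⟩ := hcol
    obtain ⟨v, hv⟩ := c.exists_rep
    have hvmem : v ∈ c.supp := by
      rw [SimpleGraph.ConnectedComponent.mem_supp_iff]; exact hv
    set g : V → ℝ := fun u =>
      if h : u ∈ c.supp then (if C ⟨u, h⟩ = 0 then 1 else -1) else 0 with hg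
    have hsum : ∑ u, g u • (fun e : G.edgeSet =>
        if u ∈ (e : Sym2 V) then (1 : ℝ) else 0) = 0 := by
      funext e
      obtain ⟨e, he⟩ := e
      induction e using Sym2.ind with
      | _ u w =>
        have hadj : G.Adj u w := he
        have huw : u ≠ w := hadj.ne
        have heval : (∑ x, g x • (fun e : G.edgeSet =>
            if x ∈ (e : Sym2 V) then (1 : ℝ) else 0)) ⟨s(u, w), he⟩
            = ∑ x, g x * (if x ∈ s(u, w) then (1 : ℝ) else 0) := by
          rw [Finset.sum_apply]; rfl
        rw [heval, sum_pair_eval g u w huw]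
        by_cases hu : u ∈ c.supp
        · have hw : w ∈ c.supp := by
            rw [SimpleGraph.ConnectedComponent.mem_supp_iff] at hu ⊢
            rw [← hu, SimpleGraph.ConnectedComponent.eq]
            exact hadj.symm.reachable
          have hadj' : (G.induce c.supp).Adj ⟨u, hu⟩ ⟨w, hw⟩ := by
            simpa using hadj
          have hne := C.valid hadj'
          have hkey : ∀ a b : Fin 2, a ≠ b → (a = 0 ↔ ¬ b = 0) := by decide
          have := (hkey _ _ hne)
          simp only [hg, dif_pos hu, dif_pos hw, Pi.zero_apply]
          by_cases hc : C ⟨u, hu⟩ = 0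
          · rw [if_pos hc, if_neg (this.mp hc)]; ring
          · rw [if_neg hc, if_pos (by by_contra h; exact hc (this.mpr h))]; ring
        · have hw : w ∉ c.supp := by
            intro hw
            apply hu
            rw [SimpleGraph.ConnectedComponent.mem_supp_iff] at hw ⊢
            rw [← hw, SimpleGraph.ConnectedComponent.eq]
            exact hadj.reachable
          simp [hg, dif_neg hu, dif_neg hw]
    have := hind g hsum v
    rw [hg] at this
    simp only [dif_pos hvmem] at this
    by_cases hc : C ⟨v, hvmem⟩ = 0 <;> simp [hc] at this
  · -- no bipartite component → linear independence
    intro hnb g hsum v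
    by_contra hgv
    have hedge : ∀ a b : V, G.Adj a b → g a = -g b := by
      intro a b hab
      have := congrFun hsum ⟨s(a, b), hab⟩
      have heval : (∑ x, g x • (fun e : G.edgeSet =>
          if x ∈ (e : Sym2 V) then (1 : ℝ) else 0)) ⟨s(a, b), hab⟩
          = ∑ x, g x * (if x ∈ s(a, b) then (1 : ℝ) else 0) := by
        rw [Finset.sum_apply]; rfl
      rw [heval, sum_pair_eval g a b hab.ne, Pi.zero_apply] at this
      linarith [this]
    set c := G.connectedComponentMk v with hc
    have hmem : ∀ u : V, u ∈ c.supp → (g u = g v ∨ g u = -g v) := by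
      intro u hu
      rw [SimpleGraph.ConnectedComponent.mem_supp_iff, hc,
        SimpleGraph.ConnectedComponent.eq] at hu
      obtain ⟨p⟩ := hu.symm
      exact walk_pm g hedge p
    have hne0 : ∀ u : V, u ∈ c.supp → g u ≠ 0 := by
      intro u hu
      rcases hmem u hu with h | h <;> rw [h] <;> simpa using hgv
    apply hnb c
    refine ⟨SimpleGraph.Coloring.mk (fun u => if 0 < g ↑u then 0 else 1) ?_⟩
    rintro ⟨a, ha⟩ ⟨b, hb⟩ hab
    have hab' : G.Adj a b := by simpa using hab
    have h1 : g a = -g b := hedge a b hab'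
    have ha0 := hne0 a ha
    have hb0 := hne0 b hb
    by_cases h : 0 < g a
    · have : ¬ 0 < g b := by rw [h1] at h; linarith
      simp [h, this]
    · have : 0 < g b := by
        rcases lt_trichotomy (g a) 0 with h' | h' | h'
        · rw [h1] at h'; linarith
        · exact absurd h' ha0
        · exact absurd h' h
      simp [h, this]
end

section
/- Let n_1, …, n_d be positive integers and let M be a subset of the box [n_1] × … × [n_d] (the set of d-tuples whose i-th entry lies in {1,…,n_i}). If M is basic, then |M| ≤ (n_1 + … + n_d) − (d − 1). -/
open Module


/-- If a subset `M` of the box `[n_1] × … × [n_d]` (identified with the dependent functions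
`x` with `x i : Fin (nf i)`) is basic — every function on `M` decomposes as a sum of
univariate functions — then `|M| ≤ (n_1 + … + n_d) − (d − 1)`. -/
theorem card_le_of_isBasic_box {d : ℕ} (nf : Fin d → ℕ) (hnf : ∀ i, 0 < nf i)
    (M : Finset ((i : Fin d) → Fin (nf i)))
    (hM : ∀ f : ((i : Fin d) → Fin (nf i)) → ℝ,
      ∃ g : (i : Fin d) → Fin (nf i) → ℝ, ∀ x ∈ M, f x = ∑ i, g i (x i)) :
    M.card ≤ (∑ i, nf i) - (d - 1) := by
  classical
  rcases Nat.eq_zero_or_pos d with hd | hd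
  · subst hd
    obtain ⟨g, hg⟩ := hM (fun _ => 1)
    have hMe : M = ∅ := by
      ext x
      simp only [Finset.notMem_empty, iff_false]
      intro hx
      have := hg x hx
      simp at this
    simp [hMe]
  · haveI : ∀ i, Nonempty (Fin (nf i)) := fun i => ⟨⟨0, hnf i⟩⟩
    let T : ((i : Fin d) → Fin (nf i) → ℝ) →ₗ[ℝ] (M → ℝ) :=
      { toFun := fun g x => ∑ i, g i (x.1 i)
        map_add' := by intro a b; funext x; simp [Finset.sum_add_distrib]
        map_smul' := by intro c a; funext x; simp [Finset.mul_sum] }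
    have hTsurj : Function.Surjective T := by
      intro f
      obtain ⟨g, hg⟩ := hM (fun x => if hx : x ∈ M then f ⟨x, hx⟩ else 0)
      refine ⟨g, ?_⟩
      funext x
      have := hg x.1 x.2
      simp only [x.2, dif_pos] at this
      simpa [T] using this.symm
    -- the sum functional on Fin d → ℝ
    let σ : (Fin d → ℝ) →ₗ[ℝ] ℝ :=
      { toFun := fun c => ∑ i, c i
        map_add' := by intro a b; simp [Finset.sum_add_distrib]
        map_smul' := by intro c a; simp [Finset.mul_sum] }
    have hσsurj : Function.Surjective σ := by
      intro r
      refine ⟨Pi.single ⟨0, hd⟩ r, ?_⟩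
      simp [σ, Finset.sum_pi_single]
    have hσker : finrank ℝ (LinearMap.ker σ) = d - 1 := by
      have h1 := LinearMap.finrank_range_add_finrank_ker σ
      rw [LinearMap.range_eq_top.mpr hσsurj, finrank_top] at h1
      simp [Module.finrank_pi] at h1
      omega
    -- embed ker σ into ker T via constants
    let S : (Fin d → ℝ) →ₗ[ℝ] ((i : Fin d) → Fin (nf i) → ℝ) :=
      { toFun := fun c i _ => c i
        map_add' := by intro a b; rfl
        map_smul' := by intro c a; rfl }
    have hmaps : ∀ c : LinearMap.ker σ, S c.1 ∈ LinearMap.ker T := by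
      rintro ⟨c, hc⟩
      have hc' : ∑ i, c i = 0 := hc
      ext x
      simp [T, S, hc']
    let φ : LinearMap.ker σ →ₗ[ℝ] LinearMap.ker T :=
      LinearMap.codRestrict _ (S.comp (LinearMap.ker σ).subtype) hmaps
    have hφinj : Function.Injective φ := by
      intro a b hab
      ext i
      have := congrFun (congrFun (congrArg Subtype.val hab) i) (Classical.arbitrary _)
      exact this
    have hle : d - 1 ≤ finrank ℝ (LinearMap.ker T) := by
      rw [← hσker]
      exact LinearMap.finrank_le_finrank_of_injective hφinj
    have h2 := LinearMap.finrank_range_add_finrank_ker T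
    rw [LinearMap.range_eq_top.mpr hTsurj, finrank_top] at h2
    have hV : finrank ℝ ((i : Fin d) → Fin (nf i) → ℝ) = ∑ i, nf i := by
      rw [Module.finrank_pi_fintype]
      simp [Module.finrank_pi]
    have hMr : finrank ℝ (M → ℝ) = M.card := by
      simp [Module.finrank_pi]
    rw [hV, hMr] at h2
    omega
end

section
/- For all integers n ≥ 2 and d ≥ 2, there exists a minimal non-basic subset M ⊆ [n]^d with |M| = 2n such that every layer of [n]^d has non-empty intersection with M; namely, M = {(k,k,…,k), (k+1,k,…,k) : k ∈ [n−1]} ∪ {(n,n,…,n), (1,n,…,n)} is such a set. Hence the lower bound 2n for minimal non-basic subsets meeting every layer cannot be improved. -/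
open Finset

theorem exists_comp_finRotate_eq_add {α : Type*} [AddCommGroup α] {n : ℕ} (h : Fin n → α)
    (hh : ∑ k, h k = 0) : ∃ A : Fin n → α, ∀ k, A (finRotate n k) = A k + h k := by
  cases n with
  | zero => exact ⟨0, fun k => k.elim0⟩
  | succ m =>
    refine ⟨Fin.partialSum (Fin.init h), Fin.lastCases ?_ fun k => ?_⟩
    · have : Fin.partialSum h (Fin.last (m + 1)) = ∑ k, h k := by
        rw [Fin.partialSum, Fin.val_last, List.take_of_length_le (by simp), List.sum_ofFn]
      rw [finRotate_last, Fin.partialSum_zero, Fin.partialSum_init, ← Fin.partialSum_succ,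
        Fin.succ_last, this, hh]
    · rw [finRotate_apply, Fin.coeSucc_eq_succ, Fin.partialSum_succ]
      rfl

theorem finRotate_apply_ne_self {n : ℕ} (hn : 2 ≤ n) (k : Fin n) : finRotate n k ≠ k :=
  Equiv.Perm.mem_support.mp (by simp [support_finRotate_of_le hn])

variable {n d : ℕ}

def DecomposesOn (M : Finset (Fin d → Fin n)) (f : (Fin d → Fin n) → ℝ) : Prop :=
  ∃ g : Fin d → Fin n → ℝ, ∀ x ∈ M, f x = ∑ i, g i (x i)

theorem not_isBasic_and_forall_ssubset_isBasic {M : Finset (Fin d → Fin n)} (hM : M.Nonempty)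
    (φ : ((Fin d → Fin n) → ℝ) →ₗ[ℝ] ℝ) (hφ : ∀ p ∈ M, φ (Pi.single p 1) ≠ 0)
    (hdec : ∀ f, DecomposesOn M f ↔ φ f = 0) : ¬ IsBasic M ∧ ∀ K ⊂ M, IsBasic K := by
  refine ⟨fun hB => ?_, fun K hK f => ?_⟩
  · obtain ⟨p, hp⟩ := hM
    exact hφ p hp ((hdec _).mp (hB _))
  · obtain ⟨p, hpM, hpK⟩ := exists_of_ssubset hK
    obtain ⟨g, hg⟩ := (hdec (f - (φ f / φ (Pi.single p 1)) • Pi.single p 1)).mpr (by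
      rw [map_sub, map_smul, smul_eq_mul, div_mul_cancel₀ _ (hφ p hpM), sub_self])
    refine ⟨g, fun x hx => ?_⟩
    have hxp : x ≠ p := fun h => hpK (h ▸ hx)
    simpa [hxp] using hg x (hK.subset hx)

section Cycle

variable (i₀ : Fin d)

def cubePoint (u v : Fin n) : Fin d → Fin n := Function.update (fun _ => v) i₀ u

@[simp] lemma cubePoint_apply_self (u v : Fin n) : cubePoint i₀ u v i₀ = u :=
  Function.update_self ..

lemma cubePoint_apply_of_ne (u v : Fin n) {i : Fin d} (h : i ≠ i₀) : cubePoint i₀ u v i = v :=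
  Function.update_of_ne h ..

@[simp] lemma cubePoint_self (k : Fin n) : cubePoint i₀ k k = fun _ => k :=
  Function.update_eq_self ..

lemma eq_cubePoint_iff {x : Fin d → Fin n} {u v : Fin n} :
    x = cubePoint i₀ u v ↔ x i₀ = u ∧ ∀ i ≠ i₀, x i = v :=
  Function.eq_update_iff

lemma cubePoint_inj [Nontrivial (Fin d)] {u v u' v' : Fin n} :
    cubePoint i₀ u v = cubePoint i₀ u' v' ↔ u = u' ∧ v = v' := by
  obtain ⟨i₁, hi₁⟩ := exists_ne i₀
  refine ⟨fun h => ⟨?_, ?_⟩, fun h => by rw [h.1, h.2]⟩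
  · simpa using congrFun h i₀
  · simpa [cubePoint_apply_of_ne _ _ _ hi₁] using congrFun h i₁

lemma sum_cubePoint {β : Type*} [AddCommMonoid β] (g : Fin d → Fin n → β) (u v : Fin n) :
    ∑ i, g i (cubePoint i₀ u v i) = g i₀ u + ∑ i ∈ univ.erase i₀, g i v := by
  rw [← add_sum_erase _ _ (mem_univ i₀), cubePoint_apply_self]
  congr 1
  exact sum_congr rfl fun i hi => by rw [cubePoint_apply_of_ne _ _ _ (ne_of_mem_erase hi)]

def cycleSet : Finset (Fin d → Fin n) :=
  univ.image (fun k => cubePoint i₀ k k) ∪ univ.image (fun k => cubePoint i₀ (finRotate n k) k)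

lemma mem_cycleSet {x : Fin d → Fin n} :
    x ∈ cycleSet i₀ ↔ ∃ k, x = cubePoint i₀ k k ∨ x = cubePoint i₀ (finRotate n k) k := by
  simp only [cycleSet, mem_union, mem_image, mem_univ, true_and, eq_comm (a := x)]
  exact exists_or.symm

def cycleForm : ((Fin d → Fin n) → ℝ) →ₗ[ℝ] ℝ :=
  ∑ k, (LinearMap.proj (R := ℝ) (φ := fun _ => ℝ) (cubePoint i₀ (finRotate n k) k) -
    LinearMap.proj (cubePoint i₀ k k))

lemma cycleForm_apply (f : (Fin d → Fin n) → ℝ) :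
    cycleForm i₀ f = ∑ k, (f (cubePoint i₀ (finRotate n k) k) - f (cubePoint i₀ k k)) := by
  simp only [cycleForm, LinearMap.coe_sum, Finset.sum_apply, LinearMap.sub_apply,
    LinearMap.coe_proj, Function.eval]

theorem decomposesOn_cycleSet_iff [Nontrivial (Fin d)] (f : (Fin d → Fin n) → ℝ) :
    DecomposesOn (cycleSet i₀) f ↔ cycleForm i₀ f = 0 := by
  rw [cycleForm_apply]
  constructor
  · rintro ⟨g, hg⟩
    have hstep : ∀ k, f (cubePoint i₀ (finRotate n k) k) - f (cubePoint i₀ k k) =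
        g i₀ (finRotate n k) - g i₀ k := fun k => by
      rw [hg _ (mem_cycleSet i₀ |>.mpr ⟨k, .inr rfl⟩), hg _ (mem_cycleSet i₀ |>.mpr ⟨k, .inl rfl⟩),
        sum_cubePoint, sum_cubePoint]
      abel
    simp only [hstep, sum_sub_distrib, Equiv.sum_comp, sub_self]
  · intro hf
    obtain ⟨A, hA⟩ := exists_comp_finRotate_eq_add _ hf
    obtain ⟨i₁, hi₁⟩ := exists_ne i₀
    refine ⟨fun i => if i = i₀ then A else if i = i₁ then fun v => f (cubePoint i₀ v v) - A v
      else 0, ?_⟩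
    have hsum : ∀ u v : Fin n, ∑ i, (if i = i₀ then A else if i = i₁ then
        fun v => f (cubePoint i₀ v v) - A v else 0) (cubePoint i₀ u v i) =
        A u + (f (cubePoint i₀ v v) - A v) := fun u v => by
      rw [sum_cubePoint, if_pos rfl, sum_congr rfl fun i hi => by rw [if_neg (ne_of_mem_erase hi)],
        sum_eq_single_of_mem i₁ (mem_erase.mpr ⟨hi₁, mem_univ _⟩) fun i _ hi => by simp [hi],
        if_pos rfl]
    intro x hx
    obtain ⟨k, rfl | rfl⟩ := (mem_cycleSet i₀).mp hx
    · rw [hsum]; ring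
    · rw [hsum, hA]; ring

theorem cycleForm_single_ne_zero [Nontrivial (Fin d)] (hn : 2 ≤ n) {p : Fin d → Fin n}
    (hp : p ∈ cycleSet i₀) : cycleForm i₀ (Pi.single p 1) ≠ 0 := by
  -- the value is `-1` at `cubePoint i₀ k k` and `1` at `cubePoint i₀ (finRotate n k) k`
  have hne (j k : Fin n) : ¬(finRotate n j = k ∧ j = k) := fun h =>
    finRotate_apply_ne_self hn j (h.2 ▸ h.1)
  have hne' (j k : Fin n) : ¬(j = finRotate n k ∧ j = k) := fun h =>
    finRotate_apply_ne_self hn k (h.2 ▸ h.1).symm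
  obtain ⟨k, rfl | rfl⟩ := (mem_cycleSet i₀).mp hp <;>
    simp only [cycleForm_apply, Pi.single_apply, cubePoint_inj, Equiv.apply_eq_iff_eq, and_self,
      hne, hne', if_false, sum_sub_distrib, sum_ite_eq', mem_univ, if_true] <;> norm_num

theorem card_cycleSet [Nontrivial (Fin d)] (hn : 2 ≤ n) :
    #(cycleSet i₀ : Finset (Fin d → Fin n)) = 2 * n := by
  rw [cycleSet, card_union_of_disjoint, card_image_of_injective, card_image_of_injective,
    card_univ, Fintype.card_fin, two_mul]
  · exact fun k l h => ((cubePoint_inj i₀).mp h).2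
  · exact fun k l h => ((cubePoint_inj i₀).mp h).2
  · simp only [disjoint_left, mem_image, mem_univ, true_and, not_exists]
    rintro _ ⟨k, rfl⟩ l h
    obtain ⟨h1, rfl⟩ := (cubePoint_inj i₀).mp h
    exact finRotate_apply_ne_self hn _ h1

theorem exists_mem_cycleSet_apply_eq (i : Fin d) (j : Fin n) : ∃ x ∈ cycleSet i₀, x i = j :=
  ⟨cubePoint i₀ j j, (mem_cycleSet i₀).mpr ⟨j, .inl rfl⟩, by simp⟩

theorem cycleSet_eq_filter (hn : 0 < n) :
    cycleSet i₀ = Finset.univ.filter (fun x : Fin d → Fin n =>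
        (∃ k : Fin n, ∀ j, x j = k) ∨
        (∃ k : Fin n, (x i₀ : ℕ) = (k : ℕ) + 1 ∧ ∀ j, j ≠ i₀ → x j = k) ∨
        ((x i₀ : ℕ) = 0 ∧ ∀ j, j ≠ i₀ → (x j : ℕ) = n - 1)) := by
  obtain ⟨m, rfl⟩ : ∃ m, n = m + 1 := ⟨n - 1, by omega⟩
  ext x
  simp only [mem_filter, mem_univ, true_and, mem_cycleSet, exists_or, eq_cubePoint_iff,
    add_tsub_cancel_right]
  refine or_congr (exists_congr fun k => ?_) ⟨?_, ?_⟩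
  · rw [← eq_cubePoint_iff, cubePoint_self, funext_iff]
  · rintro ⟨k, h0, hk⟩
    by_cases hlast : k = Fin.last m
    · subst hlast
      exact .inr ⟨by rw [h0, finRotate_last]; rfl, fun j hj => by rw [hk j hj, Fin.val_last]⟩
    · exact .inl ⟨k, by rw [h0, coe_finRotate_of_ne_last hlast], hk⟩
  · rintro (⟨k, h0, hk⟩ | ⟨h0, hk⟩)
    · have hlast : k ≠ Fin.last m := fun h => by
        have := (x i₀).isLt
        rw [h, Fin.val_last] at h0
        omega
      exact ⟨k, Fin.ext (by rw [h0, coe_finRotate_of_ne_last hlast]), hk⟩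
    · exact ⟨Fin.last m, Fin.ext (by rw [h0, finRotate_last]; rfl),
        fun j hj => Fin.ext (by rw [hk j hj, Fin.val_last])⟩

end Cycle

/-- For `n, d ≥ 2`, the set
`M = {(k,…,k), (k+1,k,…,k) : k ∈ [n−1]} ∪ {(n,…,n), (1,n,…,n)}` (written 0-indexed in
`Fin n`: all constant tuples, the tuples with first entry one more than the common value of the
remaining entries, and the tuple with first entry `1` and remaining entries `n`) is a minimal
non-basic subset of `[n]^d` of cardinality `2n` meeting every layer; hence the lower bound
`2n` for minimal non-basic subsets meeting every layer cannot be improved. -/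
theorem minimal_nonbasic_card_two_n {n d : ℕ} (hn : 2 ≤ n) (hd : 2 ≤ d) :
    ∃ M : Finset (Fin d → Fin n),
      M = Finset.univ.filter (fun x : Fin d → Fin n =>
        (∃ k : Fin n, ∀ j, x j = k) ∨
        (∃ k : Fin n, (x ⟨0, by omega⟩ : ℕ) = (k : ℕ) + 1 ∧
          ∀ j, j ≠ ⟨0, by omega⟩ → x j = k) ∨
        ((x ⟨0, by omega⟩ : ℕ) = 0 ∧ ∀ j, j ≠ ⟨0, by omega⟩ → (x j : ℕ) = n - 1)) ∧
      ¬ IsBasic M ∧ (∀ K ⊂ M, IsBasic K) ∧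
      (∀ (i : Fin d) (j : Fin n), ∃ x ∈ M, x i = j) ∧
      M.card = 2 * n := by
  have : Nontrivial (Fin d) := Fin.nontrivial_iff_two_le.mpr hd
  set i₀ : Fin d := ⟨0, by omega⟩
  have hM : (cycleSet i₀ : Finset (Fin d → Fin n)).Nonempty :=
    (exists_mem_cycleSet_apply_eq i₀ i₀ ⟨0, by omega⟩).imp fun _ h => h.1
  obtain ⟨hnonbasic, hminimal⟩ := not_isBasic_and_forall_ssubset_isBasic hM (cycleForm i₀)
    (fun _ => cycleForm_single_ne_zero i₀ hn) (decomposesOn_cycleSet_iff i₀)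
  exact ⟨cycleSet i₀, cycleSet_eq_filter i₀ (by omega), hnonbasic, hminimal,
    exists_mem_cycleSet_apply_eq i₀, card_cycleSet i₀ hn⟩
end

section
/- Let M ⊆ [n]^d be non-basic and let f be a non-trivial annihilation function of M with f(X) ≠ 0 for every X ∈ M. If every annihilation function of M is a scalar multiple of f, then M is a minimal non-basic subset (every proper subset of M is basic). -/
open Matrix


/-- Let `M ⊆ [n]^d` be non-basic, and let `f` be a non-trivial annihilation function of `M`
which is nonzero at every point of `M`. If every annihilation function of `M` is a scalar
multiple of `f`, then `M` is a minimal non-basic subset: every proper subset of `M` is basic. -/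
theorem minimal_of_unique_annihilation {n d : ℕ} (M : Finset (Fin d → Fin n))
    (hnb : ¬ IsBasic M)
    (f : (Fin d → Fin n) → ℚ)
    (hann : ∀ (i : Fin d) (j : Fin n), ∑ x ∈ M.filter (fun x => x i = j), f x = 0)
    (hnt : ∃ x ∈ M, f x ≠ 0)
    (hne : ∀ X ∈ M, f X ≠ 0)
    (huniq : ∀ c : (Fin d → Fin n) → ℚ,
      (∀ (i : Fin d) (j : Fin n), ∑ x ∈ M.filter (fun x => x i = j), c x = 0) →
      ∃ q : ℚ, ∀ x ∈ M, c x = q * f x) :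
    ∀ K ⊂ M, IsBasic K := by
  classical
  intro K hK
  have hKM : K ⊆ M := hK.subset
  obtain ⟨z, hzM, hzK⟩ : ∃ z ∈ M, z ∉ K := by
    obtain ⟨z, hz1, hz2⟩ := Finset.exists_of_ssubset hK
    exact ⟨z, hz1, hz2⟩
  set A : Matrix (Fin d × Fin n) {x // x ∈ K} ℚ :=
    Matrix.of (fun p y => if (y : Fin d → Fin n) p.1 = p.2 then 1 else 0) with hA
  -- Step 1: injectivity of the annihilation map restricted to K
  have hinj : Function.Injective A.mulVecLin := by
    rw [← LinearMap.ker_eq_bot, LinearMap.ker_eq_bot']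
    intro c hc
    set c' : (Fin d → Fin n) → ℚ := fun x => if h : x ∈ K then c ⟨x, h⟩ else 0 with hc'
    have hann' : ∀ (i : Fin d) (j : Fin n),
        ∑ x ∈ M.filter (fun x => x i = j), c' x = 0 := by
      intro i j
      have h1 : ∑ x ∈ M.filter (fun x => x i = j), c' x
          = ∑ x ∈ K.filter (fun x => x i = j), c' x := by
        refine (Finset.sum_subset (Finset.filter_subset_filter _ hKM) ?_).symm
        intro x hx hx'
        have hxK : x ∉ K := fun h => hx' (Finset.mem_filter.mpr ⟨h, (Finset.mem_filter.mp hx).2⟩)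
        simp [c', hxK]
      have h2 : A.mulVecLin c (i, j) = 0 := by rw [hc]; rfl
      rw [Matrix.mulVecLin_apply, Matrix.mulVec] at h2
      rw [h1, Finset.sum_filter]
      calc ∑ x ∈ K, (if x i = j then c' x else 0)
          = ∑ y : {x // x ∈ K}, (if (y : Fin d → Fin n) i = j then c' y else 0) :=
            (Finset.sum_coe_sort K (fun x => if x i = j then c' x else 0)).symm
        _ = ∑ y : {x // x ∈ K}, A (i, j) y * c y := by
            refine Finset.sum_congr rfl fun y _ => ?_
            simp [hA, c', y.2, ite_mul]
        _ = 0 := h2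
    obtain ⟨q, hq⟩ := huniq c' hann'
    have hq0 : q = 0 := by
      have hz := hq z hzM
      simp [c', hzK] at hz
      exact hz.resolve_right (hne z hzM)
    funext y
    have hy := hq y.1 (hKM y.2)
    simpa [c', y.2, hq0] using hy
  -- Step 2: surjectivity of the transpose
  have hrank : (Aᵀ).rank = Fintype.card {x // x ∈ K} := by
    rw [Matrix.rank_transpose, Matrix.rank, LinearMap.finrank_range_of_inj hinj]
    exact Module.finrank_fintype_fun_eq_card ℚ
  have hsurj : Function.Surjective (Aᵀ).mulVecLin := by
    rw [← LinearMap.range_eq_top]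
    apply Submodule.eq_top_of_finrank_eq
    rw [Module.finrank_fintype_fun_eq_card]
    exact hrank
  -- Step 3: build the decomposition
  intro fr
  choose g hg using fun y : {x // x ∈ K} => hsurj (Pi.single y 1)
  refine ⟨fun i j => ∑ y : {x // x ∈ K}, fr y.1 * ((g y (i, j) : ℚ) : ℝ), fun x hx => ?_⟩
  have key : ∀ y : {x // x ∈ K}, ∑ i : Fin d, g y (i, x i)
      = (if (⟨x, hx⟩ : {x // x ∈ K}) = y then (1 : ℚ) else 0) := by
    intro y
    have h := congrFun (hg y) ⟨x, hx⟩
    simp only [Matrix.mulVecLin_apply, Matrix.mulVec, dotProduct,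
      Pi.single_apply] at h
    calc ∑ i : Fin d, g y (i, x i)
        = ∑ p : Fin d × Fin n, (if x p.1 = p.2 then g y p else 0) := by
          rw [Fintype.sum_prod_type]
          refine Finset.sum_congr rfl fun i _ => ?_
          simp
      _ = ∑ p : Fin d × Fin n, Aᵀ ⟨x, hx⟩ p * g y p := by
          refine Finset.sum_congr rfl fun p _ => ?_
          simp [hA, Matrix.transpose_apply, ite_mul]
      _ = if (⟨x, hx⟩ : {x // x ∈ K}) = y then (1 : ℚ) else 0 := h
  calc fr x
      = ∑ y : {x // x ∈ K},
          fr y.1 * (((if (⟨x, hx⟩ : {x // x ∈ K}) = y then (1 : ℚ) else 0) : ℚ) : ℝ) := by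
        simp [mul_ite, apply_ite (fun q : ℚ => (q : ℝ)), Finset.sum_ite_eq]
    _ = ∑ y : {x // x ∈ K}, fr y.1 * ((∑ i : Fin d, g y (i, x i) : ℚ) : ℝ) := by
        refine Finset.sum_congr rfl fun y _ => ?_
        rw [key y]
    _ = ∑ y : {x // x ∈ K}, ∑ i : Fin d, fr y.1 * ((g y (i, x i) : ℚ) : ℝ) := by
        refine Finset.sum_congr rfl fun y _ => ?_
        rw [Rat.cast_sum, Finset.mul_sum]
    _ = ∑ i : Fin d, ∑ y : {x // x ∈ K}, fr y.1 * ((g y (i, x i) : ℚ) : ℝ) :=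
        Finset.sum_comm
end
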